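/- arXiv:1910.03919 — 4 statements merged into one kernel-verified Lean document; each statement's English description precedes it below -/
import Mathlib

section
/- Let G be a game graph with n nodes and priorities up to d, let τ be a positional winning strategy for Even in G, let G_τ be the strategy subgraph of G with respect to τ, and let V_τ be the set of nodes of G_τ reachable from the starting node v_I. Then every cycle of G_τ whose nodes all lie in V_τ has even maximal edge priority; in particular, within any strongly connected subset of V_τ, no edge of G_τ whose priority is the maximum priority of that subset can have odd priority. -/
namespace PGSep

/-- Letters of the alphabet `Σ_{n,d}`: triples (source node, priority, target node). -/
abbrev Letter : Type := ℕ × ℕ × ℕ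

/-- The priority component of a letter. -/
def prio (e : Letter) : ℕ := e.2.1

/-- Membership in the alphabet `Σ_{n,d} = {1,…,n} × {1,…,d} × {1,…,n}`. -/
def InAlph (n d : ℕ) (e : Letter) : Prop :=
  1 ≤ e.1 ∧ e.1 ≤ n ∧ 1 ≤ e.2.1 ∧ e.2.1 ≤ d ∧ 1 ≤ e.2.2 ∧ e.2.2 ≤ n

/-- Infinite words over the alphabet. -/
abbrev Word : Type := ℕ → Letter

/-- `p` occurs infinitely often among the values of `f`. -/
def InfOft (f : ℕ → ℕ) (p : ℕ) : Prop := ∀ N, ∃ k, N ≤ k ∧ f k = p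

/-- The largest value occurring infinitely often in `f` exists and is even. -/
def MaxInfOftEven (f : ℕ → ℕ) : Prop :=
  ∃ p, Even p ∧ InfOft f p ∧ ∀ q, InfOft f q → q ≤ p

/-- The largest value occurring infinitely often in `f` exists and is odd. -/
def MaxInfOftOdd (f : ℕ → ℕ) : Prop :=
  ∃ p, Odd p ∧ InfOft f p ∧ ∀ q, InfOft f q → q ≤ p

/-- `LimsupEven_{n,d}`: the largest priority occurring infinitely often is even. -/
def LimsupEven (w : Word) : Prop := MaxInfOftEven fun k => prio (w k)

/-- `LimsupOdd_{n,d}`: the largest priority occurring infinitely often is odd. -/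
def LimsupOdd (w : Word) : Prop := MaxInfOftOdd fun k => prio (w k)

/-- An infinite sequence of triples is a path in the edge set `E`. -/
def IsPathSeq {V : Type*} (E : Set (V × ℕ × V)) (w : ℕ → V × ℕ × V) : Prop :=
  ∀ k, w k ∈ E ∧ (w k).2.2 = (w (k + 1)).1

/-- A game graph with `n` nodes (the set {1,…,n}) and priorities up to `d`. -/
structure GameGraph (n d : ℕ) where
  /-- nodes owned by Even (V_□) -/
  evenN : Set ℕ
  /-- nodes owned by Odd (V_△) -/
  oddN : Set ℕ
  /-- the starting node -/
  start : ℕ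
  /-- the set of edges (a subset of the alphabet) -/
  edges : Set Letter
  union_eq : evenN ∪ oddN = Set.Icc 1 n
  disj : Disjoint evenN oddN
  start_mem : start ∈ Set.Icc 1 n
  edges_alph : ∀ e ∈ edges, InAlph n d e
  total : ∀ v ∈ Set.Icc (1 : ℕ) n, ∃ e ∈ edges, e.1 = v

/-- A play in a game graph: an infinite path starting at the starting node,
identified with the word listing its consecutive edges. -/
def IsPlay {n d : ℕ} (G : GameGraph n d) (w : Word) : Prop :=
  (w 0).1 = G.start ∧ IsPathSeq G.edges w

/-- A positional strategy for Even: one outgoing edge for each node of `V_□`. -/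
structure EPosStrat {n d : ℕ} (G : GameGraph n d) where
  choice : ℕ → Letter
  mem : ∀ v ∈ G.evenN, choice v ∈ G.edges ∧ (choice v).1 = v

/-- A positional strategy for Odd: one outgoing edge for each node of `V_△`. -/
structure OPosStrat {n d : ℕ} (G : GameGraph n d) where
  choice : ℕ → Letter
  mem : ∀ v ∈ G.oddN, choice v ∈ G.edges ∧ (choice v).1 = v

/-- A play arises from a positional strategy of Even. -/
def ArisesE {n d : ℕ} {G : GameGraph n d} (τ : EPosStrat G) (w : Word) : Prop :=
  IsPlay G w ∧ ∀ k, (w k).1 ∈ G.evenN → w k = τ.choice (w k).1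

/-- A play arises from a positional strategy of Odd. -/
def ArisesO {n d : ℕ} {G : GameGraph n d} (τ : OPosStrat G) (w : Word) : Prop :=
  IsPlay G w ∧ ∀ k, (w k).1 ∈ G.oddN → w k = τ.choice (w k).1

/-- A positional strategy for Even is winning: every arising play is won by Even. -/
def EWinningPos {n d : ℕ} {G : GameGraph n d} (τ : EPosStrat G) : Prop :=
  ∀ w, ArisesE τ w → LimsupEven w

/-- A positional strategy for Odd is winning: every arising play is won by Odd
(i.e. not won by Even). -/
def OWinningPos {n d : ℕ} {G : GameGraph n d} (τ : OPosStrat G) : Prop :=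
  ∀ w, ArisesO τ w → ¬ LimsupEven w

/-- `PosEven_{n,d}`: plays arising from positional winning strategies for Even. -/
def PosEven (n d : ℕ) : Set Word :=
  {w | ∃ G : GameGraph n d, ∃ τ : EPosStrat G, EWinningPos τ ∧ ArisesE τ w}

/-- `PosOdd_{n,d}`: plays arising from positional winning strategies for Odd. -/
def PosOdd (n d : ℕ) : Set Word :=
  {w | ∃ G : GameGraph n d, ∃ τ : OPosStrat G, OWinningPos τ ∧ ArisesO τ w}

/-- A nondeterministic automaton reading letters, with state space `Q`. -/
structure Automaton (Q : Type*) where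
  init : Q
  trans : Set (Q × Letter × ℕ × Q)

/-- Transitions: (source state, letter, emitted priority, target state). -/
abbrev Trans (Q : Type*) : Type _ := Q × Letter × ℕ × Q

def tSrc {Q : Type*} (t : Trans Q) : Q := t.1
def tLetter {Q : Type*} (t : Trans Q) : Letter := t.2.1
def tPrio {Q : Type*} (t : Trans Q) : ℕ := t.2.2.1
def tTgt {Q : Type*} (t : Trans Q) : Q := t.2.2.2

/-- `A` is a (total) nondeterministic parity automaton over `Σ_{n,d}` with
transition priorities in `{1,…,d'}`. -/
def IsParityAutomaton (n d d' : ℕ) {Q : Type*} (A : Automaton Q) : Prop :=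
  (∀ t ∈ A.trans, InAlph n d (tLetter t) ∧ 1 ≤ tPrio t ∧ tPrio t ≤ d') ∧
  (∀ (s : Q) (e : Letter), InAlph n d e → ∃ p s', (s, e, p, s') ∈ A.trans)

/-- A run of the automaton: an infinite path of transitions starting at `init`. -/
def IsRun {Q : Type*} (A : Automaton Q) (ρ : ℕ → Trans Q) : Prop :=
  tSrc (ρ 0) = A.init ∧ ∀ k, ρ k ∈ A.trans ∧ tTgt (ρ k) = tSrc (ρ (k + 1))

/-- The run `ρ` reads the word `w`. -/
def Reads {Q : Type*} (ρ : ℕ → Trans Q) (w : Word) : Prop := ∀ k, tLetter (ρ k) = w k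

/-- A run is accepting: the largest priority labelling infinitely many
of its transitions is even. -/
def Accepting {Q : Type*} (ρ : ℕ → Trans Q) : Prop := MaxInfOftEven fun k => tPrio (ρ k)

/-- The language of the automaton. -/
def Lang {Q : Type*} (A : Automaton Q) : Set Word :=
  {w | ∃ ρ, IsRun A ρ ∧ Reads ρ w ∧ Accepting ρ}

/-- A transition strategy for `A`, resolving nondeterminism based on the word read
so far, the current state, and the next letter. -/
structure TransStrat (n d : ℕ) {Q : Type*} (A : Automaton Q) where
  app : List Letter → Q → Letter → Trans Q
  valid : ∀ w s e, InAlph n d e →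
    app w s e ∈ A.trans ∧ tSrc (app w s e) = s ∧ tLetter (app w s e) = e

/-- The state reached after reading the first `k` letters of `w` following `σ`. -/
def stateAt {n d : ℕ} {Q : Type*} (A : Automaton Q) (σ : TransStrat n d A) (w : Word) :
    ℕ → Q
  | 0 => A.init
  | k + 1 => tTgt (σ.app ((List.range k).map w) (stateAt A σ w k) (w k))

/-- The run obtained by following the transition strategy `σ` while reading `w`. -/
def followRun {n d : ℕ} {Q : Type*} (A : Automaton Q) (σ : TransStrat n d A) (w : Word)
    (k : ℕ) : Trans Q :=
  σ.app ((List.range k).map w) (stateAt A σ w k) (w k)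

/-- The transition strategy `σ` is winning for the set of words `L`. -/
def WinningFor {n d : ℕ} {Q : Type*} (A : Automaton Q) (σ : TransStrat n d A)
    (L : Set Word) : Prop :=
  ∀ w ∈ L, Accepting (followRun A σ w)

/-- `A` is good for games: some transition strategy is winning for the whole `L(A)`. -/
def GFG (n d : ℕ) {Q : Type*} (A : Automaton Q) : Prop :=
  ∃ σ : TransStrat n d A, WinningFor A σ (Lang A)

/-- `A` is a parity-games separator. -/
def PGSeparator (n d : ℕ) {Q : Type*} (A : Automaton Q) : Prop :=
  (∀ w ∈ PosEven n d, w ∈ Lang A) ∧ ∀ w ∈ PosOdd n d, w ∉ Lang A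

/-- `A` is a strong PG separator: additionally it rejects all of `LimsupOdd`. -/
def StrongPGSeparator (n d : ℕ) {Q : Type*} (A : Automaton Q) : Prop :=
  PGSeparator n d A ∧ ∀ w : Word, LimsupOdd w → w ∉ Lang A

/-- `A` is suitable for parity games (SFPG). -/
def SFPG (n d : ℕ) {Q : Type*} (A : Automaton Q) : Prop :=
  PGSeparator n d A ∧
  ∀ (G : GameGraph n d) (τ : EPosStrat G), EWinningPos τ →
    ∃ σ : TransStrat n d A, WinningFor A σ {w | ArisesE τ w}

/-- A generic game with parity winning condition, over an arbitrary set of nodes. -/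
structure PGame (V : Type*) where
  evenOwn : V → Prop
  start : V
  edges : Set (V × ℕ × V)

/-- A play of a generic game. -/
def PGame.IsPlay {V : Type*} (g : PGame V) (w : ℕ → V × ℕ × V) : Prop :=
  (w 0).1 = g.start ∧ IsPathSeq g.edges w

/-- `IsFinPath E u l v`: the list of edges `l` is a finite path from `u` to `v`. -/
def IsFinPath {V : Type*} (E : Set (V × ℕ × V)) : V → List (V × ℕ × V) → V → Prop
  | u, [], v => u = v
  | u, e :: l, v => e ∈ E ∧ e.1 = u ∧ IsFinPath E e.2.2 l v

/-- Even has a winning strategy in the game `g`. -/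
def EvenWins {V : Type*} (g : PGame V) : Prop :=
  ∃ str : List (V × ℕ × V) → V × ℕ × V,
    (∀ l v, IsFinPath g.edges g.start l v → g.evenOwn v →
      str l ∈ g.edges ∧ (str l).1 = v) ∧
    ∀ w, g.IsPlay w → (∀ k, g.evenOwn ((w k).1) → w k = str ((List.range k).map w)) →
      MaxInfOftEven fun k => (w k).2.1

/-- Odd has a winning strategy in the game `g`. -/
def OddWins {V : Type*} (g : PGame V) : Prop :=
  ∃ str : List (V × ℕ × V) → V × ℕ × V,
    (∀ l v, IsFinPath g.edges g.start l v → ¬ g.evenOwn v →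
      str l ∈ g.edges ∧ (str l).1 = v) ∧
    ∀ w, g.IsPlay w → (∀ k, ¬ g.evenOwn ((w k).1) → w k = str ((List.range k).map w)) →
      ¬ MaxInfOftEven fun k => (w k).2.1

/-- Even has a strategy winning for the safety condition `safe` in the game `g`. -/
def EvenWinsSafety {V : Type*} (g : PGame V) (safe : V → Prop) : Prop :=
  ∃ str : List (V × ℕ × V) → V × ℕ × V,
    (∀ l v, IsFinPath g.edges g.start l v → g.evenOwn v →
      str l ∈ g.edges ∧ (str l).1 = v) ∧
    ∀ w, g.IsPlay w → (∀ k, g.evenOwn ((w k).1) → w k = str ((List.range k).map w)) →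
      ∀ k, safe (w k).2.2

/-- A game graph viewed as a generic game. -/
def GameGraph.toPGame {n d : ℕ} (G : GameGraph n d) : PGame ℕ :=
  { evenOwn := fun v => v ∈ G.evenN, start := G.start, edges := G.edges }

/-- The synchronized product `G × A`. -/
def prodGame {n d : ℕ} {Q : Type*} (G : GameGraph n d) (A : Automaton Q) :
    PGame ((ℕ ⊕ Letter) × Q) where
  evenOwn := fun x => match x.1 with
    | Sum.inl v => v ∈ G.evenN
    | Sum.inr _ => True
  start := (Sum.inl G.start, A.init)
  edges := {ed | (∃ e ∈ G.edges, ∃ s : Q, ed = ((Sum.inl e.1, s), 1, (Sum.inr e, s))) ∨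
    (∃ t ∈ A.trans, tLetter t ∈ G.edges ∧
      ed = ((Sum.inr (tLetter t), tSrc t), tPrio t, (Sum.inl (tLetter t).2.2, tTgt t)))}

/-- The number of registers: `rn(n) = 1 + ⌊log₂ n⌋`. -/
def rn (n : ℕ) : ℕ := 1 + Nat.log 2 n

/-- Update of a register state (bottom register first) by priority `p`:
the maximal prefix of registers smaller than `p` is replaced by `p`. -/
def update (p : ℕ) : List ℕ → List ℕ
  | [] => []
  | r :: l => if r < p then p :: update p l else r :: l

/-- The `k`-reset (registers numbered from 1, bottom first): the `k`-th register is
removed and a `1` is inserted at the bottom. -/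
def resetReg (k : ℕ) (l : List ℕ) : List ℕ := 1 :: l.eraseIdx (k - 1)

/-- The value of register number `k` (registers numbered from 1, bottom first). -/
def regVal (k : ℕ) (l : List ℕ) : ℕ := l.getD (k - 1) 0

/-- Lehtinen's register automaton `R_{n,d}`. -/
def Raut (n d : ℕ) : Automaton (List ℕ) where
  init := List.replicate (rn n) 1
  trans := {t | ∃ s e, InAlph n d e ∧
    (t = (s, e, 1, update (prio e) s) ∨
     ∃ k, 1 ≤ k ∧ k ≤ rn n ∧
       ((Even (regVal k (update (prio e) s)) ∧
           t = (s, e, 2 * k, resetReg k (update (prio e) s))) ∨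
        (Odd (regVal k (update (prio e) s)) ∧
           t = (s, e, 2 * k + 1, resetReg k (update (prio e) s)))))}

/-- States of the safety automaton `S_{n,d}`: `none` is the rejecting state `rej`;
otherwise a state of `R_{n,d}` together with a tuple of counters (bottom first:
`c_0` is the head). -/
abbrev SState : Type := Option (List ℕ × List ℕ)

/-- Counters `c_0,…,c_{k-1}` are reset to `c0`; the rest is kept. -/
def bumpKeep (c0 k : ℕ) (c : List ℕ) : List ℕ := List.replicate k c0 ++ c.drop k

/-- Counters `c_0,…,c_{k-1}` are reset to `c0`; counter `c_k` is decremented. -/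
def bumpDec (c0 k : ℕ) (c : List ℕ) : List ℕ :=
  List.replicate k c0 ++ ((c.getD k 0 - 1) :: c.drop (k + 1))

/-- The safety automaton `S_{n,d}`. -/
def Saut (n d : ℕ) : Automaton SState where
  init := some (List.replicate (rn n) 1, List.replicate (rn n + 1) n)
  trans := {t |
    (∃ e, InAlph n d e ∧ t = (none, e, 1, none)) ∨
    (∃ s c e k s', 1 ≤ k ∧ (s, e, 2 * k, s') ∈ (Raut n d).trans ∧
       t = (some (s, c), e, 2, some (s', bumpKeep n k c))) ∨
    (∃ s c e k s', (s, e, 2 * k + 1, s') ∈ (Raut n d).trans ∧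
       ((1 < c.getD k 0 ∧ t = (some (s, c), e, 2, some (s', bumpDec n k c))) ∨
        (c.getD k 0 = 1 ∧ t = (some (s, c), e, 1, none))))}

/-- `bad(ρ) ≤ B` for an infinite run `ρ`: every infix containing no transition of
priority above an odd `p` contains at most `B` transitions of priority `p`. -/
def badLE {Q : Type*} (ρ : ℕ → Trans Q) (B : ℕ) : Prop :=
  ∀ a b p, Odd p → (∀ i, a ≤ i → i < b → tPrio (ρ i) ≤ p) →
    ((Finset.Ico a b).filter fun i => tPrio (ρ i) = p).card ≤ B

/-- `bad(ρ) ≤ B` for a partial run of length `L` (possibly infinite). -/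
def badLEPartial {Q : Type*} (ρ : ℕ → Trans Q) (L : ℕ∞) (B : ℕ) : Prop :=
  ∀ (a b p : ℕ), Odd p → (b : ℕ∞) ≤ L → (∀ i, a ≤ i → i < b → tPrio (ρ i) ≤ p) →
    ((Finset.Ico a b).filter fun i => tPrio (ρ i) = p).card ≤ B

/-- The strategy subgraph `G_τ`: all outgoing edges of Odd's nodes, and only the
chosen edge from each of Even's nodes. -/
def GtauEdges {n d : ℕ} (G : GameGraph n d) (τ : EPosStrat G) : Set Letter :=
  {e | e ∈ G.edges ∧ (e.1 ∈ G.evenN → e = τ.choice e.1)}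

/-- One step along an edge of `E`. -/
def StepRel (E : Set Letter) (u v : ℕ) : Prop := ∃ p, (u, p, v) ∈ E

/-- Reachability along edges of `E`. -/
def Reach (E : Set Letter) : ℕ → ℕ → Prop := Relation.ReflTransGen (StepRel E)

/-- `V_τ`: the nodes of `G_τ` reachable from the starting node. -/
def Vtau {n d : ℕ} (G : GameGraph n d) (τ : EPosStrat G) : Set ℕ :=
  {v | Reach (GtauEdges G τ) G.start v}

/-- `G_{S,p}`: edges of `E` inside `S` of priority at most `p`. -/
def subEdges (E : Set Letter) (S : Set ℕ) (p : ℕ) : Set Letter :=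
  {e | e ∈ E ∧ e.1 ∈ S ∧ e.2.2 ∈ S ∧ prio e ≤ p}

/-- `parts` lists the strongly connected components of the graph `(S, E)` in a
topological order. -/
def IsSCCDecomp (E : Set Letter) (S : Set ℕ) (parts : List (Set ℕ)) : Prop :=
  (∀ P ∈ parts, P.Nonempty ∧ P ⊆ S) ∧
  (∀ v ∈ S, ∃ P ∈ parts, v ∈ P) ∧
  List.Pairwise Disjoint parts ∧
  (∀ P ∈ parts, ∀ u ∈ P, ∀ v ∈ S, ((Reach E u v ∧ Reach E v u) ↔ v ∈ P)) ∧
  (∀ (i j : ℕ) (hi : i < parts.length) (hj : j < parts.length), i < j →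
    ∀ u ∈ parts.get ⟨j, hj⟩, ∀ v ∈ parts.get ⟨i, hi⟩, ¬ StepRel E u v)

/-- The nodes of a tree given by the children function `ch` with root `(r, R)`. -/
inductive TreeNode (ch : ℕ → Set ℕ → List (Set ℕ)) (r : ℕ) (R : Set ℕ) :
    ℕ → Set ℕ → Prop where
  | root : TreeNode ch r R r R
  | child {k : ℕ} {S T : Set ℕ} : TreeNode ch r R (k + 1) S → T ∈ ch (k + 1) S →
      TreeNode ch r R k T

/-- `ch` describes a game tree of `G_τ`: the root is `(⌈d/2⌉, V_τ)`, and the children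
of a node `(k+1, S)` are the SCCs of `G_{S,2(k+1)-1}` in topological order. -/
def IsGameTree {n d : ℕ} (G : GameGraph n d) (τ : EPosStrat G)
    (ch : ℕ → Set ℕ → List (Set ℕ)) : Prop :=
  ∀ k S, TreeNode ch ((d + 1) / 2) (Vtau G τ) (k + 1) S →
    IsSCCDecomp (subEdges (GtauEdges G τ) S (2 * (k + 1) - 1)) S (ch (k + 1) S)

/-- `fstl ch l k S`: the leftmost descendant of the node `(k, S)` on level `l`
(for `l ≤ k`). -/
def fstl (ch : ℕ → Set ℕ → List (Set ℕ)) (l : ℕ) : ℕ → Set ℕ → Set ℕ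
  | 0, S => S
  | k + 1, S => if l = k + 1 then S else fstl ch l k ((ch (k + 1) S).headD ∅)

/-!
If a cycle `c` of `G_τ` passes through a node reachable from the start, then walking from the
start to the cycle and around it forever is a play consistent with `τ`, and the priorities it
sees infinitely often are exactly those on `c`. As `τ` is winning, the largest of them is even.
An edge of maximal priority in a strongly connected set closes such a cycle.
-/

section Paths

variable {V : Type*} {E E' : Set (V × ℕ × V)}

theorem IsFinPath.mem_edges {u v : V} {l : List (V × ℕ × V)} (h : IsFinPath E u l v) :
    ∀ e ∈ l, e ∈ E := by
  induction l generalizing u with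
  | nil => simp
  | cons a t ih =>
    intro e he
    rcases List.mem_cons.1 he with rfl | he
    exacts [h.1, ih h.2.2 e he]

theorem IsFinPath.append {u v x : V} {l l' : List (V × ℕ × V)} (h : IsFinPath E u l v)
    (h' : IsFinPath E v l' x) : IsFinPath E u (l ++ l') x := by
  induction l generalizing u with
  | nil => cases h; exact h'
  | cons a t ih => exact ⟨h.1, h.2.1, ih h.2.2⟩

theorem IsFinPath.mono (hE : E ⊆ E') {u v : V} {l : List (V × ℕ × V)}
    (h : IsFinPath E u l v) : IsFinPath E' u l v := by
  induction l generalizing u with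
  | nil => exact h
  | cons a t ih => exact ⟨hE h.1, h.2.1, ih h.2.2⟩

theorem isPathSeq_of_invariant (P : Stream' (V × ℕ × V) → Prop)
    (step : ∀ w, P w → w.head ∈ E ∧ w.head.2.2 = w.tail.head.1 ∧ P w.tail)
    {w : Stream' (V × ℕ × V)} (hw : P w) : IsPathSeq E w := by
  have hdrop : ∀ k, P (w.drop k) := by
    intro k
    induction k with
    | zero => exact hw
    | succ k ih => simpa only [Stream'.drop_succ, Stream'.tail_drop] using (step _ ih).2.2
  intro k
  have h := step _ (hdrop k)
  simp only [Stream'.head_drop, Stream'.tail_drop, ← Stream'.drop_succ] at h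
  exact ⟨h.1, h.2.1⟩

theorem isPathSeq_appendStream_cycle {s u : V} {L c : List (V × ℕ × V)} (hc : c ≠ [])
    (hL : IsFinPath E s L u) (hcyc : IsFinPath E u c u) :
    ((L ++ₛ Stream'.cycle c hc) 0).1 = s ∧ IsPathSeq E (L ++ₛ Stream'.cycle c hc) := by
  obtain ⟨b, t', rfl⟩ := List.exists_cons_of_ne_nil hc
  set P : Stream' (V × ℕ × V) → Prop := fun w =>
    ∃ a t, IsFinPath E a.1 (a :: t) u ∧ w = (a :: t) ++ₛ Stream'.cycle (b :: t') hc
  have hP : ∀ w, P w → w.head ∈ E ∧ w.head.2.2 = w.tail.head.1 ∧ P w.tail := by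
    rintro w ⟨a, t, hpath, rfl⟩
    refine ⟨hpath.1, ?_⟩
    cases t with
    | nil =>
      refine ⟨hpath.2.2.trans hcyc.2.1.symm, b, t', ⟨hcyc.1, rfl, hcyc.2.2⟩, ?_⟩
      exact Stream'.cycle_eq _ hc
    | cons a' t => exact ⟨hpath.2.2.2.1.symm, a', t, ⟨hpath.2.2.1, rfl, hpath.2.2.2.2⟩, rfl⟩
  obtain ⟨a, t, hat⟩ := List.exists_cons_of_ne_nil (List.append_ne_nil_of_right_ne_nil L hc)
  have hpath := hL.append hcyc
  rw [hat] at hpath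
  have hw : L ++ₛ Stream'.cycle (b :: t') hc = (a :: t) ++ₛ Stream'.cycle (b :: t') hc := by
    rw [← hat, Stream'.append_append_stream, ← Stream'.cycle_eq]
  rw [hw]
  exact ⟨hpath.2.1, isPathSeq_of_invariant P hP ⟨a, t, ⟨hpath.1, rfl, hpath.2.2⟩, rfl⟩⟩

end Paths

theorem Stream'.get_cycle {α : Type*} (l : List α) (h : l ≠ []) (k : ℕ) :
    (Stream'.cycle l h).get k = l[k % l.length]'(Nat.mod_lt _ (List.length_pos_iff.2 h)) := by
  have hlen := List.length_pos_iff.2 h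
  induction k using Nat.strong_induction_on with
  | _ k ih =>
    rcases lt_or_ge k l.length with hk | hk
    · rw [Stream'.cycle_eq, Stream'.get_append_left _ _ _ hk]
      simp only [Nat.mod_eq_of_lt hk]
    · obtain ⟨j, rfl⟩ := Nat.exists_eq_add_of_le hk
      rw [Stream'.cycle_eq, Stream'.get_append_right, ih j (by omega)]
      simp only [Nat.add_mod_left]

theorem infOft_appendStream_cycle_iff {α : Type*} (f : α → ℕ) (p l : List α) (hl : l ≠ [])
    (q : ℕ) : InfOft (fun k => f ((p ++ₛ Stream'.cycle l hl).get k)) q ↔ q ∈ l.map f := by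
  have hget : ∀ j, (p ++ₛ Stream'.cycle l hl).get (p.length + j)
      = l[j % l.length]'(Nat.mod_lt _ (List.length_pos_iff.2 hl)) := fun j => by
    rw [Stream'.get_append_right, Stream'.get_cycle]
  constructor
  · intro hq
    obtain ⟨k, hk, hkq⟩ := hq p.length
    obtain ⟨j, rfl⟩ := Nat.exists_eq_add_of_le hk
    simp only [hget] at hkq
    exact List.mem_map.2 ⟨_, List.getElem_mem _, hkq⟩
  · intro hq N
    obtain ⟨e, he, rfl⟩ := List.mem_map.1 hq
    obtain ⟨i, hi, rfl⟩ := List.getElem_of_mem he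
    have hlen : 1 ≤ l.length := List.length_pos_iff.2 hl
    refine ⟨p.length + (i + l.length * N), by nlinarith, ?_⟩
    simp only [hget, Nat.add_mul_mod_self_left, Nat.mod_eq_of_lt hi]

theorem Reach.exists_isFinPath {E : Set Letter} {a b : ℕ} (h : Reach E a b) :
    ∃ L, IsFinPath E a L b := by
  induction h with
  | refl => exact ⟨[], rfl⟩
  | tail _ hstep ih =>
    obtain ⟨L, hL⟩ := ih
    obtain ⟨p, hp⟩ := hstep
    exact ⟨L ++ [(_, p, _)], hL.append ⟨hp, rfl, rfl⟩⟩

section StrategySubgraph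

variable {n d : ℕ} {G : GameGraph n d} {τ : EPosStrat G}

theorem arisesE_of_isPathSeq_gtauEdges {w : Word} (h0 : (w 0).1 = G.start)
    (hw : IsPathSeq (GtauEdges G τ) w) : ArisesE τ w :=
  ⟨⟨h0, fun k => ⟨(hw k).1.1, (hw k).2⟩⟩, fun k => (hw k).1.2⟩

theorem exists_even_max_prio_of_cycle (hτ : EWinningPos τ) {v : ℕ} (hv : v ∈ Vtau G τ)
    {c : List Letter} (hc : c ≠ []) (hcyc : IsFinPath (GtauEdges G τ) v c v) :
    ∃ p, Even p ∧ (∃ e ∈ c, prio e = p) ∧ ∀ e ∈ c, prio e ≤ p := by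
  obtain ⟨L, hL⟩ := Reach.exists_isFinPath hv
  obtain ⟨h0, hpath⟩ := isPathSeq_appendStream_cycle hc hL hcyc
  obtain ⟨p, hp, hpinf, hpmax⟩ := hτ _ (arisesE_of_isPathSeq_gtauEdges h0 hpath)
  have hinf := infOft_appendStream_cycle_iff prio L c hc
  obtain ⟨e, he, hep⟩ := List.mem_map.1 ((hinf p).1 hpinf)
  exact ⟨p, hp, ⟨e, he, hep⟩, fun e' he' => hpmax _ ((hinf _).2 (List.mem_map_of_mem he'))⟩

theorem even_prio_of_isMax_of_reach (hτ : EWinningPos τ) {E : Set Letter}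
    (hE : E ⊆ GtauEdges G τ) {e : Letter} (he : e ∈ E) (hmax : ∀ e' ∈ E, prio e' ≤ prio e)
    (hsrc : e.1 ∈ Vtau G τ) (hback : Reach E e.2.2 e.1) : Even (prio e) := by
  obtain ⟨L, hL⟩ := Reach.exists_isFinPath hback
  have hcyc : IsFinPath (GtauEdges G τ) e.1 (e :: L) e.1 := ⟨hE he, rfl, hL.mono hE⟩
  obtain ⟨p, hp, ⟨e', he', rfl⟩, hle⟩ :=
    exists_even_max_prio_of_cycle hτ hsrc (List.cons_ne_nil e L) hcyc
  have he'E : e' ∈ E := (List.mem_cons.1 he').elim (fun h => h ▸ he) (hL.mem_edges e')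
  rwa [le_antisymm (hle e List.mem_cons_self) (hmax e' he'E)]

end StrategySubgraph

theorem strategy_subgraph_cycles_even_general (n d : ℕ)
    (G : GameGraph n d) (τ : EPosStrat G) (hτ : EWinningPos τ) :
    (∀ (v : ℕ) (l : List Letter), l ≠ [] → IsFinPath (GtauEdges G τ) v l v →
      v ∈ Vtau G τ → (∀ e ∈ l, e.1 ∈ Vtau G τ) →
      ∃ p, Even p ∧ (∃ e ∈ l, prio e = p) ∧ ∀ e ∈ l, prio e ≤ p) ∧
    (∀ S : Set ℕ, S ⊆ Vtau G τ →
      (∀ u ∈ S, ∀ v ∈ S, Reach (subEdges (GtauEdges G τ) S d) u v) →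
      ∀ e ∈ subEdges (GtauEdges G τ) S d,
        (∀ e' ∈ subEdges (GtauEdges G τ) S d, prio e' ≤ prio e) →
        ¬ Odd (prio e)) := by
  refine ⟨fun v l hl hcyc hv _ => exists_even_max_prio_of_cycle hτ hv hl hcyc, ?_⟩
  intro S hS hconn e he hmax
  have hsub : subEdges (GtauEdges G τ) S d ⊆ GtauEdges G τ := fun _ h => h.1
  exact Nat.not_odd_iff_even.2 <|
    even_prio_of_isMax_of_reach hτ hsub he hmax (hS he.2.1) (hconn _ he.2.2.1 _ he.2.1)

/-- Every cycle of the strategy subgraph `G_τ` of a positional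
winning strategy `τ` for Even, all of whose nodes lie in `V_τ`, has even maximal
edge priority; in particular, within every strongly connected subset of `V_τ`, no
edge of maximal priority has odd priority. -/
theorem strategy_subgraph_cycles_even (n d : ℕ) (hn : 1 ≤ n) (hd : 1 ≤ d)
    (G : GameGraph n d) (τ : EPosStrat G) (hτ : EWinningPos τ) :
    (∀ (v : ℕ) (l : List Letter), l ≠ [] → IsFinPath (GtauEdges G τ) v l v →
      v ∈ Vtau G τ → (∀ e ∈ l, e.1 ∈ Vtau G τ) →
      ∃ p, Even p ∧ (∃ e ∈ l, prio e = p) ∧ ∀ e ∈ l, prio e ≤ p) ∧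
    (∀ S : Set ℕ, S ⊆ Vtau G τ →
      (∀ u ∈ S, ∀ v ∈ S, Reach (subEdges (GtauEdges G τ) S d) u v) →
      ∀ e ∈ subEdges (GtauEdges G τ) S d,
        (∀ e' ∈ subEdges (GtauEdges G τ) S d, prio e' ≤ prio e) →
        ¬ Odd (prio e)) :=
  strategy_subgraph_cycles_even_general n d G τ hτ

end PGSep
end

section
/- For all integers n ≥ 2 and d ≥ 2, the periodic infinite word ((1,2,1)(1,1,2)(2,2,2)(2,1,1))^ω over Σ_{n,d} belongs to LimsupEven_{n,d} but does not belong to PosEven_{n,d}. -/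
namespace PGSep

/-- The periodic word `((1,2,1)(1,1,2)(2,2,2)(2,1,1))^ω`. -/
def wExample : Word := fun k =>
  match k % 4 with
  | 0 => (1, 2, 1)
  | 1 => (1, 1, 2)
  | 2 => (2, 2, 2)
  | _ => (2, 1, 1)

/-- For `n ≥ 2` and `d ≥ 2`, the word
`((1,2,1)(1,1,2)(2,2,2)(2,1,1))^ω` is in `LimsupEven_{n,d}` but not in
`PosEven_{n,d}`. -/
theorem limsupEven_not_posEven (n d : ℕ) (hn : 2 ≤ n) (hd : 2 ≤ d) :
    LimsupEven wExample ∧ wExample ∉ PosEven n d := by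
  constructor
  · refine ⟨2, by norm_num, ?_, ?_⟩
    · intro N
      refine ⟨4 * N, by omega, ?_⟩
      have h : (4 * N) % 4 = 0 := by omega
      simp [wExample, prio, h]
    · intro q hq
      obtain ⟨k, -, hk⟩ := hq 0
      rw [← hk]
      have h4 : k % 4 = 0 ∨ k % 4 = 1 ∨ k % 4 = 2 ∨ k % 4 = 3 := by omega
      rcases h4 with h|h|h|h <;> simp [wExample, prio, h]
  · rintro ⟨G, τ, hwin, ⟨⟨hstart, hpath⟩, hfollow⟩⟩
    have hw0 : wExample 0 = (1,2,1) := rfl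
    have hw1 : wExample 1 = (1,1,2) := rfl
    have hw2 : wExample 2 = (2,2,2) := rfl
    have hw3 : wExample 3 = (2,1,1) := rfl
    have h1 : (1:ℕ) ∉ G.evenN := by
      intro h
      have e0 := hfollow 0 (by rw [hw0]; exact h)
      have e1 := hfollow 1 (by rw [hw1]; exact h)
      rw [hw0] at e0
      rw [hw1] at e1
      have : ((1,2,1) : Letter) = (1,1,2) := by
        rw [show ((1,2,1):Letter).1 = ((1,1,2):Letter).1 from rfl] at e0
        exact e0.trans e1.symm
      simp at this
    have h2 : (2:ℕ) ∉ G.evenN := by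
      intro h
      have e2 := hfollow 2 (by rw [hw2]; exact h)
      have e3 := hfollow 3 (by rw [hw3]; exact h)
      rw [hw2] at e2
      rw [hw3] at e3
      have : ((2,2,2) : Letter) = (2,1,1) := by
        rw [show ((2,2,2):Letter).1 = ((2,1,1):Letter).1 from rfl] at e2
        exact e2.trans e3.symm
      simp at this
    have hstart1 : G.start = 1 := by rw [← hstart]; rfl
    have he1 : ((1,1,2) : Letter) ∈ G.edges := by rw [← hw1]; exact (hpath 1).1
    have he3 : ((2,1,1) : Letter) ∈ G.edges := by rw [← hw3]; exact (hpath 3).1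
    set w' : Word := fun k => if k % 2 = 0 then ((1,1,2) : Letter) else (2,1,1) with hw'
    have hplay : IsPlay G w' := by
      constructor
      · simp [hw', hstart1]
      · intro k
        have h2' : k % 2 = 0 ∨ k % 2 = 1 := by omega
        rcases h2' with h|h
        · have h' : (k+1) % 2 = 1 := by omega
          constructor
          · simpa [hw', h] using he1
          · simp [hw', h, h']
        · have h' : (k+1) % 2 = 0 := by omega
          constructor
          · simpa [hw', h] using he3
          · simp [hw', h, h']
    have harise : ArisesE τ w' := by
      refine ⟨hplay, fun k hk => ?_⟩
      have h2' : k % 2 = 0 ∨ k % 2 = 1 := by omega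
      rcases h2' with h|h
      · exact absurd (by simpa [hw', h] using hk) h1
      · exact absurd (by simpa [hw', h] using hk) h2
    obtain ⟨p, hpe, hpinf, -⟩ := hwin w' harise
    obtain ⟨k, -, hk⟩ := hpinf 0
    have hp1 : p = 1 := by
      rw [← hk]
      have h2' : k % 2 = 0 ∨ k % 2 = 1 := by omega
      rcases h2' with h|h <;> simp [hw', prio, h]
    rw [hp1] at hpe
    simp [Nat.even_iff] at hpe

end PGSep
end

section
/- Let n and d be positive integers, let G be a game graph with n nodes and priorities up to d, and let A be a deterministic PG separator with input alphabet Σ_{n,d} (for every state s and letter e there is exactly one transition (s,e,p,s') ∈ Δ). Then Even has a winning strategy in G if and only if Even has a winning strategy in the synchronized product G×A. -/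
namespace PGSep

/-!
By Zielonka's theorem one of the players has a positional winning strategy `τ` in `G`. It is
proved here for arbitrary finite arenas by the usual recursion: remove the attractor of the
top-priority edges for the player `i` of that parity; if the opponent wins nowhere in the
remaining subgame, `i` wins everywhere, and otherwise the opponent's attractor to her winning
region there is won by her, and one recurses on the rest.

If `τ` is Even's, every play consistent with `τ` lies in `PosEven`, so it is accepted by `A`,
and by determinism the unique run of `A` on it is accepting. Hence Even wins `G × A` by playing
`τ` at nodes of `G` and the transition of `A` at edges. If `τ` is Odd's, lifting it to `G × A`
produces plays whose projections lie in `PosOdd`, so are rejected by `A`, and Even wins neither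
game. The priorities of a play of `G × A` are those of the run interleaved with `1`, which does
not affect the winner since all priorities of `A` are at least `1`.
-/

open Classical

/-- Players are encoded as `Bool`, `true` being Even. -/
def ParityWin (b : Bool) (f : ℕ → ℕ) : Prop :=
  ∃ p, decide (Even p) = b ∧ InfOft f p ∧ ∀ q, InfOft f q → q ≤ p

theorem parityWin_true_iff {f : ℕ → ℕ} : ParityWin true f ↔ MaxInfOftEven f := by
  simp [ParityWin, MaxInfOftEven]

theorem ParityWin.not_parityWin_not {b : Bool} {f : ℕ → ℕ} (h : ParityWin b f) :
    ¬ ParityWin (!b) f := by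
  rintro ⟨q, hq, hiq, hbq⟩
  obtain ⟨p, hp, hip, hbp⟩ := h
  obtain rfl : p = q := le_antisymm (hbq p hip) (hbp q hiq)
  cases b <;> simp_all

theorem infOft_comp_add_iff {f : ℕ → ℕ} {m p : ℕ} :
    InfOft (fun k => f (k + m)) p ↔ InfOft f p := by
  refine ⟨fun h N => ?_, fun h N => ?_⟩
  · obtain ⟨k, hk, hkp⟩ := h N
    exact ⟨k + m, by omega, hkp⟩
  · obtain ⟨k, hk, hkp⟩ := h (N + m)
    exact ⟨k - m, by omega, by simpa only [Nat.sub_add_cancel (by omega : m ≤ k)]⟩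

theorem parityWin_comp_add_iff {b : Bool} {f : ℕ → ℕ} {m : ℕ} :
    ParityWin b (fun k => f (k + m)) ↔ ParityWin b f := by
  simp only [ParityWin, infOft_comp_add_iff]

theorem parityWin_of_infOft_max {f : ℕ → ℕ} {d : ℕ} (hle : ∀ k, f k ≤ d) (hd : InfOft f d) :
    ParityWin (decide (Even d)) f :=
  ⟨d, rfl, hd, fun q hq => by obtain ⟨k, -, rfl⟩ := hq 0; exact hle k⟩

def IsArena {V : Type*} (S : Set V) (E : Set (V × ℕ × V)) : Prop :=
  (∀ e ∈ E, e.1 ∈ S ∧ e.2.2 ∈ S) ∧ ∀ v ∈ S, ∃ e ∈ E, e.1 = v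

def edgesIn {V : Type*} (E : Set (V × ℕ × V)) (X : Set V) : Set (V × ℕ × V) :=
  {e | e ∈ E ∧ e.1 ∈ X ∧ e.2.2 ∈ X}

section Attractor

variable {V : Type*} (own : V → Bool) (S : Set V) (E F : Set (V × ℕ × V)) (b : Bool)
  (T : Set V)

def attrStep (X : Set V) : Set V :=
  {v | v ∈ S ∧ ((own v = b ∧ ∃ e ∈ E, e.1 = v ∧ (e ∈ F ∨ e.2.2 ∈ X)) ∨
      (own v ≠ b ∧ ∀ e ∈ E, e.1 = v → e ∈ F ∨ e.2.2 ∈ X))}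

/-- The nodes from which player `b` can force, within `k` steps, that an edge of `F`
is traversed or `T` is reached. -/
def attrN : ℕ → Set V
  | 0 => T
  | k + 1 => attrN k ∪ attrStep own S E F b (attrN k)

def attractor : Set V := ⋃ k, attrN own S E F b T k

noncomputable def attrRank (v : V) : ℕ := sInf {k | v ∈ attrN own S E F b T k}

noncomputable def attrStrategy (v : V) : V × ℕ × V :=
  if h : ∃ e ∈ E, e.1 = v ∧
      (e ∈ F ∨ e.2.2 ∈ attrN own S E F b T (attrRank own S E F b T v - 1))
  then h.choose else (v, 0, v)

variable {own S E F b T}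

theorem attrN_mono : Monotone (attrN own S E F b T) :=
  monotone_nat_of_le_succ fun _ => Set.subset_union_left

theorem attrN_subset_attractor (k : ℕ) : attrN own S E F b T k ⊆ attractor own S E F b T :=
  Set.subset_iUnion (attrN own S E F b T) k

theorem subset_attractor : T ⊆ attractor own S E F b T := attrN_subset_attractor 0

theorem attractor_subset (hT : T ⊆ S) : attractor own S E F b T ⊆ S := by
  refine Set.iUnion_subset fun k => ?_
  induction k with
  | zero => exact hT
  | succ k ih => exact Set.union_subset ih fun v hv => hv.1

theorem mem_attrN_attrRank {v : V} (hv : v ∈ attractor own S E F b T) :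
    v ∈ attrN own S E F b T (attrRank own S E F b T v) :=
  Nat.sInf_mem (Set.mem_iUnion.1 hv)

theorem attrRank_le {v : V} {k : ℕ} (h : v ∈ attrN own S E F b T k) :
    attrRank own S E F b T v ≤ k :=
  Nat.sInf_le h

theorem mem_attrStep_of_attrRank {v : V} (hv : v ∈ attractor own S E F b T) (hvT : v ∉ T) :
    ∃ r, attrRank own S E F b T v = r + 1 ∧ v ∈ attrStep own S E F b (attrN own S E F b T r) := by
  obtain ⟨r, hr⟩ : ∃ r, attrRank own S E F b T v = r + 1 := by
    refine Nat.exists_eq_add_one.2 (Nat.pos_of_ne_zero fun h0 => hvT ?_)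
    simpa [h0, attrN] using mem_attrN_attrRank hv
  have hmem := mem_attrN_attrRank hv
  rw [hr] at hmem
  refine ⟨r, hr, hmem.resolve_left fun h => ?_⟩
  have := attrRank_le h
  omega

theorem exists_edge_of_attrRank {v : V} (hv : v ∈ attractor own S E F b T) (hvT : v ∉ T)
    (hb : own v = b) : ∃ e ∈ E, e.1 = v ∧
      (e ∈ F ∨ e.2.2 ∈ attrN own S E F b T (attrRank own S E F b T v - 1)) := by
  obtain ⟨r, hr, -, ⟨-, hex⟩ | ⟨hb', -⟩⟩ := mem_attrStep_of_attrRank hv hvT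
  · rwa [hr, Nat.add_sub_cancel]
  · exact absurd hb hb'

theorem attrStrategy_spec {v : V} (hv : v ∈ attractor own S E F b T) (hvT : v ∉ T)
    (hb : own v = b) :
    attrStrategy own S E F b T v ∈ E ∧ (attrStrategy own S E F b T v).1 = v ∧
      (attrStrategy own S E F b T v ∈ F ∨ (attrStrategy own S E F b T v).2.2 ∈
        attrN own S E F b T (attrRank own S E F b T v - 1)) := by
  rw [attrStrategy, dif_pos (exists_edge_of_attrRank hv hvT hb)]
  exact (exists_edge_of_attrRank hv hvT hb).choose_spec

theorem attractor_edge {v : V} (hv : v ∈ attractor own S E F b T) (hvT : v ∉ T)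
    {e : V × ℕ × V} (he : e ∈ E) (h1 : e.1 = v)
    (hc : own v = b → e = attrStrategy own S E F b T v) :
    e ∈ F ∨ (e.2.2 ∈ attractor own S E F b T ∧
      attrRank own S E F b T e.2.2 < attrRank own S E F b T v) := by
  obtain ⟨r, hr, -, ⟨hb, -⟩ | ⟨-, hall⟩⟩ := mem_attrStep_of_attrRank hv hvT
  · rw [hc hb]
    refine (attrStrategy_spec hv hvT hb).2.2.imp_right fun h => ⟨attrN_subset_attractor _ h, ?_⟩
    have := attrRank_le h
    omega
  · refine (hall e he h1).imp_right fun h => ⟨attrN_subset_attractor r h, ?_⟩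
    have := attrRank_le h
    omega

theorem attractor_force {w : ℕ → V × ℕ × V} (hw : IsPathSeq E w)
    (hc : ∀ k, own (w k).1 = b → (w k).1 ∈ attractor own S E F b T → (w k).1 ∉ T →
      w k = attrStrategy own S E F b T (w k).1)
    {t : ℕ} (ht : (w t).1 ∈ attractor own S E F b T) :
    ∃ t', t ≤ t' ∧ (w t' ∈ F ∨ (w t').1 ∈ T) := by
  induction hr : attrRank own S E F b T (w t).1 using Nat.strong_induction_on generalizing t
    with | _ r ih =>
  by_cases hT : (w t).1 ∈ T
  · exact ⟨t, le_rfl, Or.inr hT⟩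
  rcases attractor_edge ht hT (hw t).1 rfl (fun hb => hc t hb ht hT) with hF | ⟨hA, hlt⟩
  · exact ⟨t, le_rfl, Or.inl hF⟩
  · rw [(hw t).2] at hA hlt
    obtain ⟨t', ht', h⟩ := ih _ (hr ▸ hlt) hA rfl
    exact ⟨t', by omega, h⟩

theorem not_mem_attractor_of_edge {v : V} (hv : v ∈ S) (hvA : v ∉ attractor own S E F b T)
    (hb : own v = b) {e : V × ℕ × V} (he : e ∈ E) (h1 : e.1 = v) :
    e ∉ F ∧ e.2.2 ∉ attractor own S E F b T := by
  refine ⟨fun hF => hvA (attrN_subset_attractor 1 ?_), fun hA => ?_⟩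
  · exact Or.inr ⟨hv, Or.inl ⟨hb, e, he, h1, Or.inl hF⟩⟩
  · obtain ⟨k, hk⟩ := Set.mem_iUnion.1 hA
    exact hvA (attrN_subset_attractor (k + 1) (Or.inr ⟨hv, Or.inl ⟨hb, e, he, h1, Or.inr hk⟩⟩))

theorem exists_edge_not_mem_attractor (hE : E.Finite) {v : V} (hv : v ∈ S)
    (hvA : v ∉ attractor own S E F b T) (hb : own v ≠ b) :
    ∃ e ∈ E, e.1 = v ∧ e ∉ F ∧ e.2.2 ∉ attractor own S E F b T := by
  by_contra! h
  have hfin : ((fun e => e.2.2) '' {e | e ∈ E ∧ e.1 = v ∧ e ∉ F}).Finite :=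
    (hE.subset fun e he => he.1).image _
  obtain ⟨k, hk⟩ := attrN_mono.directed_le.exists_mem_subset_of_finset_subset_biUnion
    (s := hfin.toFinset) (by
      rintro _ hu
      obtain ⟨e, ⟨he, h1, hF⟩, rfl⟩ := hfin.mem_toFinset.1 hu
      exact h e he h1 hF)
  refine hvA (attrN_subset_attractor (k + 1) (Or.inr ⟨hv, Or.inr ⟨hb, fun e he h1 => ?_⟩⟩))
  by_cases hF : e ∈ F
  · exact Or.inl hF
  · exact Or.inr (hk (hfin.mem_toFinset.2 ⟨e, ⟨he, h1, hF⟩, rfl⟩))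

theorem mem_edgesIn_of_not_mem_attractor (hA : IsArena S E) {v : V}
    (hv : v ∈ S \ attractor own S E F b T) (hb : own v = b) {e : V × ℕ × V} (he : e ∈ E)
    (h1 : e.1 = v) : e ∈ edgesIn (E \ F) (S \ attractor own S E F b T) :=
  have h := not_mem_attractor_of_edge hv.1 hv.2 hb he h1
  ⟨⟨he, h.1⟩, h1 ▸ hv, (hA.1 e he).2, h.2⟩

theorem isArena_diff_attractor (hA : IsArena S E) (hE : E.Finite) :
    IsArena (S \ attractor own S E F b T) (edgesIn (E \ F) (S \ attractor own S E F b T)) := by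
  refine ⟨fun e he => he.2, fun v hv => ?_⟩
  by_cases hb : own v = b
  · obtain ⟨e, he, h1⟩ := hA.2 v hv.1
    exact ⟨e, mem_edgesIn_of_not_mem_attractor hA hv hb he h1, h1⟩
  · obtain ⟨e, he, h1, hF, hA'⟩ := exists_edge_not_mem_attractor hE hv.1 hv.2 hb
    exact ⟨e, ⟨⟨he, hF⟩, h1 ▸ hv, (hA.1 e he).2, hA'⟩, h1⟩

end Attractor

section Zielonka

variable {V : Type*} (own : V → Bool)

def IsStrategyOn (S : Set V) (E : Set (V × ℕ × V)) (b : Bool) (σ : V → V × ℕ × V) : Prop :=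
  ∀ v ∈ S, own v = b → σ v ∈ E ∧ (σ v).1 = v

def Follows (b : Bool) (σ : V → V × ℕ × V) (w : ℕ → V × ℕ × V) : Prop :=
  ∀ k, own (w k).1 = b → w k = σ (w k).1

def WinsFrom (E : Set (V × ℕ × V)) (b : Bool) (σ : V → V × ℕ × V) (X : Set V) : Prop :=
  ∀ w, IsPathSeq E w → Follows own b σ w → (w 0).1 ∈ X → ParityWin b fun k => (w k).2.1

structure IsSolution (S : Set V) (E : Set (V × ℕ × V)) (W : Bool → Set V)
    (σ : Bool → V → V × ℕ × V) : Prop where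
  cover : S ⊆ W true ∪ W false
  subset : ∀ b, W b ⊆ S
  isStrategyOn : ∀ b, IsStrategyOn own S E b (σ b)
  winsFrom : ∀ b, WinsFrom own E b (σ b) (W b)

def PositionallyDetermined (S : Set V) (E : Set (V × ℕ × V)) : Prop :=
  ∃ W σ, IsSolution own S E W σ

noncomputable def anyEdge (E : Set (V × ℕ × V)) (v : V) : V × ℕ × V :=
  if h : ∃ e ∈ E, e.1 = v then h.choose else (v, 0, v)

variable {own} {S : Set V} {E : Set (V × ℕ × V)} {W : Bool → Set V} {σ : Bool → V → V × ℕ × V}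

theorem IsSolution.mem_or_mem (hz : IsSolution own S E W σ) (b : Bool) {v : V} (hv : v ∈ S) :
    v ∈ W b ∨ v ∈ W (!b) := by
  cases b
  · exact (hz.cover hv).symm
  · exact hz.cover hv

theorem positionallyDetermined_of_pair (i : Bool) {X Y : Set V} {σX σY : V → V × ℕ × V}
    (hcover : S ⊆ X ∪ Y) (hX : X ⊆ S) (hY : Y ⊆ S) (hσX : IsStrategyOn own S E i σX)
    (hσY : IsStrategyOn own S E (!i) σY) (hwX : WinsFrom own E i σX X)
    (hwY : WinsFrom own E (!i) σY Y) : PositionallyDetermined own S E := by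
  cases i
  · exact ⟨fun b => cond b Y X, fun b => cond b σY σX, by simpa [Set.union_comm] using hcover,
      Bool.forall_bool.2 ⟨hX, hY⟩, Bool.forall_bool.2 ⟨hσX, hσY⟩, Bool.forall_bool.2 ⟨hwX, hwY⟩⟩
  · exact ⟨fun b => cond b X Y, fun b => cond b σX σY, hcover,
      Bool.forall_bool.2 ⟨hY, hX⟩, Bool.forall_bool.2 ⟨hσY, hσX⟩, Bool.forall_bool.2 ⟨hwY, hwX⟩⟩

theorem isStrategyOn_anyEdge (hA : IsArena S E) (b : Bool) :
    IsStrategyOn own S E b (anyEdge E) := fun v hv _ => by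
  rw [anyEdge, dif_pos (hA.2 v hv)]
  exact (hA.2 v hv).choose_spec

theorem winsFrom_empty {b : Bool} {τ : V → V × ℕ × V} : WinsFrom own E b τ ∅ :=
  fun _ _ _ h => h.elim

theorem exists_path_follows (hA : IsArena S E) (hσ : ∀ b, IsStrategyOn own S E b (σ b))
    {v : V} (hv : v ∈ S) : ∃ w, IsPathSeq E w ∧ (w 0).1 = v ∧ ∀ b, Follows own b (σ b) w := by
  set next : V → V := fun u => (σ (own u) u).2.2
  have hst : ∀ u ∈ S, σ (own u) u ∈ E ∧ (σ (own u) u).1 = u := fun u hu => hσ (own u) u hu rfl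
  have hnode : ∀ k, next^[k] v ∈ S := by
    intro k
    induction k with
    | zero => exact hv
    | succ k ih => rw [Function.iterate_succ_apply']; exact (hA.1 _ (hst _ ih).1).2
  refine ⟨fun k => σ (own (next^[k] v)) (next^[k] v), fun k => ⟨(hst _ (hnode k)).1, ?_⟩,
    (hst v hv).2, fun b k hb => ?_⟩
  · rw [(hst _ (hnode (k + 1))).2, Function.iterate_succ_apply']
  · rw [(hst _ (hnode k)).2] at hb ⊢
    exact congrArg (σ · _) hb

/-- Winning regions are traps: a play leaving `W b` for `W (!b)` and then following both
strategies would be won by both players. -/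
theorem IsSolution.mem_of_edge (hz : IsSolution own S E W σ) (hA : IsArena S E) {b : Bool}
    {v : V} {e : V × ℕ × V} (hv : v ∈ W b) (he : e ∈ E) (h1 : e.1 = v)
    (hc : own v = b → e = σ b v) : e.2.2 ∈ W b := by
  refine (hz.mem_or_mem b (hA.1 e he).2).resolve_right fun hu => ?_
  obtain ⟨w, hw, hw0, hf⟩ := exists_path_follows hA hz.isStrategyOn (hA.1 e he).2
  let w' : ℕ → V × ℕ × V := fun k => Nat.casesOn k e w
  have hw' : IsPathSeq E w' := by
    rintro (_ | k)
    exacts [⟨he, hw0.symm⟩, hw k]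
  have hf' : Follows own b (σ b) w' := by
    rintro (_ | k) hb
    exacts [h1 ▸ hc (h1 ▸ hb), hf b k hb]
  have hwin := hz.winsFrom b w' hw' hf' (h1 ▸ hv)
  exact ((parityWin_comp_add_iff (m := 1)).2 hwin).not_parityWin_not
    (hz.winsFrom (!b) w hw (hf _) (hw0 ▸ hu))

theorem mem_edgesIn_diff_attractor (hA : IsArena S E) {F : Set (V × ℕ × V)} {b : Bool}
    {T : Set V} {τ : V → V × ℕ × V} (hτ : IsStrategyOn own (S \ attractor own S E F b T)
      (edgesIn (E \ F) (S \ attractor own S E F b T)) (!b) τ)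
    {v : V} (hv : v ∈ S \ attractor own S E F b T) {e : V × ℕ × V} (he : e ∈ E) (h1 : e.1 = v)
    (hc : own v = !b → e = τ v) : e ∈ edgesIn (E \ F) (S \ attractor own S E F b T) := by
  by_cases hb : own v = b
  · exact mem_edgesIn_of_not_mem_attractor hA hv hb he h1
  · have hb' := Bool.eq_not_of_ne hb
    exact hc hb' ▸ (hτ v hv hb').1

theorem IsSolution.mem_of_edge_diff_attractor (hA : IsArena S E) (hE : E.Finite)
    {F : Set (V × ℕ × V)} {b : Bool} {T : Set V}
    (hz : IsSolution own (S \ attractor own S E F b T)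
      (edgesIn (E \ F) (S \ attractor own S E F b T)) W σ)
    {v : V} (hv : v ∈ W (!b)) {e : V × ℕ × V} (he : e ∈ E) (h1 : e.1 = v)
    (hc : own v = !b → e = σ (!b) v) :
    e ∈ edgesIn (E \ F) (S \ attractor own S E F b T) ∧ e.2.2 ∈ W (!b) :=
  have hmem := mem_edgesIn_diff_attractor hA (hz.isStrategyOn _) (hz.subset _ hv) he h1 hc
  ⟨hmem, hz.mem_of_edge (isArena_diff_attractor hA hE) hv hmem h1 hc⟩

theorem WinsFrom.parityWin_of_tail {E₀ : Set (V × ℕ × V)} {b : Bool} {τ : V → V × ℕ × V}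
    {X : Set V} (h : WinsFrom own E₀ b τ X) {w : ℕ → V × ℕ × V} {t : ℕ}
    (hE : ∀ k, t ≤ k → w k ∈ E₀) (hlink : ∀ k, (w k).2.2 = (w (k + 1)).1)
    (hc : ∀ k, t ≤ k → own (w k).1 = b → w k = τ (w k).1) (hX : (w t).1 ∈ X) :
    ParityWin b fun k => (w k).2.1 := by
  refine parityWin_comp_add_iff.1 (h (fun k => w (k + t)) (fun k => ⟨hE _ (by omega), ?_⟩)
    (fun k hb => hc _ (by omega) hb) (by simpa using hX))
  rw [hlink, Nat.add_right_comm]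

theorem winsFrom_of_opponent_empty (hA : IsArena S E) {d : ℕ} {i : Bool}
    (hi : decide (Even d) = i) {F : Set (V × ℕ × V)} (hd : ∀ e ∈ E, e.2.1 ≤ d)
    (hF : ∀ e ∈ F, e.2.1 = d)
    (hz : IsSolution own (S \ attractor own S E F i ∅)
      (edgesIn (E \ F) (S \ attractor own S E F i ∅)) W σ) (hW : W (!i) = ∅) :
    WinsFrom own E i (fun v => if v ∈ attractor own S E F i ∅ then
      attrStrategy own S E F i ∅ v else σ i v) S := by
  intro w hw hc _
  by_cases hinf : ∀ t, ∃ t', t ≤ t' ∧ w t' ∈ F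
  · refine hi ▸ parityWin_of_infOft_max (fun k => hd _ (hw k).1) fun N => ?_
    obtain ⟨t', ht', hF'⟩ := hinf N
    exact ⟨t', ht', hF _ hF'⟩
  push Not at hinf
  obtain ⟨t, ht⟩ := hinf
  have hout : ∀ k, t ≤ k → (w k).1 ∈ S \ attractor own S E F i ∅ := by
    refine fun k hk => ⟨(hA.1 _ (hw k).1).1, fun hk' => ?_⟩
    obtain ⟨t', ht', hF' | hT⟩ :=
      attractor_force hw (fun j hb hj _ => by simpa [hj] using hc j hb) hk'
    exacts [ht t' (by omega) hF', hT]
  refine (hz.winsFrom i).parityWin_of_tail (t := t)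
    (fun k hk => ⟨⟨(hw k).1, ht k hk⟩, hout k hk, (hw k).2 ▸ hout (k + 1) (by omega)⟩)
    (fun k => (hw k).2) (fun k hk hb => by simpa [(hout k hk).2] using hc k hb) ?_
  simpa [hW] using hz.mem_or_mem i (hout t le_rfl)

theorem positionallyDetermined_of_opponent_empty (hA : IsArena S E) {d : ℕ} {i : Bool}
    (hi : decide (Even d) = i) {F : Set (V × ℕ × V)} (hd : ∀ e ∈ E, e.2.1 ≤ d)
    (hF : ∀ e ∈ F, e.2.1 = d)
    (hz : IsSolution own (S \ attractor own S E F i ∅)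
      (edgesIn (E \ F) (S \ attractor own S E F i ∅)) W σ) (hW : W (!i) = ∅) :
    PositionallyDetermined own S E := by
  refine positionallyDetermined_of_pair i Set.subset_union_left subset_rfl (Set.empty_subset S)
    (fun v hv hb => ?_) (isStrategyOn_anyEdge hA _) (winsFrom_of_opponent_empty hA hi hd hF hz hW)
    winsFrom_empty
  by_cases hvA : v ∈ attractor own S E F i ∅
  · simpa [hvA] using (attrStrategy_spec hvA (Set.notMem_empty v) hb).imp_right And.left
  · simpa [hvA] using (hz.isStrategyOn i v ⟨hv, hvA⟩ hb).imp_left fun h => h.1.1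

theorem winsFrom_diff_attractor (hA : IsArena S E) {b : Bool} {F : Set (V × ℕ × V)}
    {T : Set V} (hz : IsSolution own (S \ attractor own S E F b T)
      (edgesIn (E \ F) (S \ attractor own S E F b T)) W σ) :
    WinsFrom own E (!b) (fun v => if v ∈ S \ attractor own S E F b T then σ (!b) v
      else anyEdge E v) (W (!b)) := by
  intro w hw hc h0
  have hin : ∀ k, (w k).1 ∈ S \ attractor own S E F b T →
      w k ∈ edgesIn (E \ F) (S \ attractor own S E F b T) := fun k hk =>
    mem_edgesIn_diff_attractor hA (hz.isStrategyOn _) hk (hw k).1 rfl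
      fun hb => by simpa [hk] using hc k hb
  have hstay : ∀ k, (w k).1 ∈ S \ attractor own S E F b T := by
    intro k
    induction k with
    | zero => exact hz.subset _ h0
    | succ k ih => rw [← (hw k).2]; exact (hin k ih).2.2
  exact (hz.winsFrom (!b)).parityWin_of_tail (t := 0) (fun k _ => hin k (hstay k))
    (fun k => (hw k).2) (fun k _ hb => by simpa [hstay k] using hc k hb) h0

/-- Once the play enters the attractor `B` of `W' (!i)` it is forced into `W' (!i)`, a trap for
`i` in the whole game; a play avoiding `B` stays in the subgame solved by `W''`. -/
theorem winsFrom_attractor_union (hA : IsArena S E) (hE : E.Finite) {i : Bool}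
    {F : Set (V × ℕ × V)} {W' W'' : Bool → Set V} {σ' σ'' : Bool → V → V × ℕ × V}
    (hz' : IsSolution own (S \ attractor own S E F i ∅)
      (edgesIn (E \ F) (S \ attractor own S E F i ∅)) W' σ')
    (hz'' : IsSolution own (S \ attractor own S E ∅ (!i) (W' (!i)))
      (edgesIn (E \ ∅) (S \ attractor own S E ∅ (!i) (W' (!i)))) W'' σ'') :
    WinsFrom own E (!i) (fun v => if v ∈ W' (!i) then σ' (!i) v
      else if v ∈ attractor own S E ∅ (!i) (W' (!i)) then
        attrStrategy own S E ∅ (!i) (W' (!i)) v else σ'' (!i) v)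
      (attractor own S E ∅ (!i) (W' (!i)) ∪ W'' (!i)) := by
  intro w hw hc h0
  have hT : ∀ k, (w k).1 ∈ W' (!i) →
      w k ∈ edgesIn (E \ F) (S \ attractor own S E F i ∅) ∧ (w (k + 1)).1 ∈ W' (!i) :=
    fun k hk => (hw k).2 ▸ hz'.mem_of_edge_diff_attractor hA hE hk (hw k).1 rfl
      fun hb => by simpa [hk] using hc k hb
  by_cases hB : ∃ t, (w t).1 ∈ attractor own S E ∅ (!i) (W' (!i))
  · obtain ⟨t, ht⟩ := hB
    obtain ⟨t', -, hF | hT'⟩ :=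
      attractor_force hw (fun k hb hkB hkT => by simpa [hkT, hkB] using hc k hb) ht
    · exact hF.elim
    have hstay : ∀ k, t' ≤ k → (w k).1 ∈ W' (!i) :=
      fun k hk => Nat.le_induction hT' (fun k _ ih => (hT k ih).2) k hk
    exact (hz'.winsFrom (!i)).parityWin_of_tail (fun k hk => (hT k (hstay k hk)).1)
      (fun k => (hw k).2) (fun k hk hb => by simpa [hstay k hk] using hc k hb) hT'
  · push Not at hB
    have hout : ∀ k, (w k).1 ∈ S \ attractor own S E ∅ (!i) (W' (!i)) :=
      fun k => ⟨(hA.1 _ (hw k).1).1, hB k⟩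
    refine (hz''.winsFrom (!i)).parityWin_of_tail (t := 0)
      (fun k _ => ⟨⟨(hw k).1, Set.notMem_empty _⟩, hout k, (hw k).2 ▸ hout (k + 1)⟩)
      (fun k => (hw k).2) (fun k _ hb => ?_) (h0.resolve_left (hB 0))
    have hkT : (w k).1 ∉ W' (!i) := fun h => hB k (subset_attractor h)
    simpa [hB k, hkT] using hc k hb

theorem positionallyDetermined_of_attractor_split (hA : IsArena S E) (hE : E.Finite) {i : Bool}
    {F : Set (V × ℕ × V)} {W' W'' : Bool → Set V} {σ' σ'' : Bool → V → V × ℕ × V}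
    (hz' : IsSolution own (S \ attractor own S E F i ∅)
      (edgesIn (E \ F) (S \ attractor own S E F i ∅)) W' σ')
    (hz'' : IsSolution own (S \ attractor own S E ∅ (!i) (W' (!i)))
      (edgesIn (E \ ∅) (S \ attractor own S E ∅ (!i) (W' (!i)))) W'' σ'') :
    PositionallyDetermined own S E := by
  have hBS : attractor own S E ∅ (!i) (W' (!i)) ⊆ S :=
    attractor_subset ((hz'.subset _).trans Set.sdiff_subset)
  refine positionallyDetermined_of_pair i (X := W'' i)
    (Y := attractor own S E ∅ (!i) (W' (!i)) ∪ W'' (!i)) (fun v hv => ?_)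
    ((hz''.subset i).trans Set.sdiff_subset)
    (Set.union_subset hBS ((hz''.subset _).trans Set.sdiff_subset)) (fun v hv hb => ?_)
    (fun v hv hb => ?_) (by simpa only [Bool.not_not] using winsFrom_diff_attractor hA hz'')
    (winsFrom_attractor_union hA hE hz' hz'')
  · by_cases hvB : v ∈ attractor own S E ∅ (!i) (W' (!i))
    · exact Or.inr (Or.inl hvB)
    · exact (hz''.mem_or_mem i ⟨hv, hvB⟩).imp_right Or.inr
  · by_cases hvB : v ∈ S \ attractor own S E ∅ (!i) (W' (!i))
    · rw [if_pos hvB]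
      exact (hz''.isStrategyOn i v hvB hb).imp_left fun h => h.1.1
    · rw [if_neg hvB]
      exact isStrategyOn_anyEdge hA i v hv hb
  · by_cases hvT : v ∈ W' (!i)
    · simpa [hvT] using
        (hz'.isStrategyOn _ v (hz'.subset _ hvT) hb).imp_left fun h => h.1.1
    by_cases hvB : v ∈ attractor own S E ∅ (!i) (W' (!i))
    · simpa [hvT, hvB] using (attrStrategy_spec hvB hvT hb).imp_right And.left
    · simpa [hvT, hvB] using (hz''.isStrategyOn _ v ⟨hv, hvB⟩ hb).imp_left fun h => h.1.1

/-- Zielonka's theorem. -/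
theorem positionallyDetermined_of_finite (d : ℕ) (hS : S.Finite) (hA : IsArena S E)
    (hd : ∀ e ∈ E, e.2.1 < d) : PositionallyDetermined own S E := by
  induction d generalizing S E with
  | zero =>
    obtain rfl : S = ∅ := Set.eq_empty_of_forall_notMem fun v hv => by
      obtain ⟨e, he, -⟩ := hA.2 v hv
      exact absurd (hd e he) (Nat.not_lt_zero _)
    exact positionallyDetermined_of_pair true (Set.empty_subset _) subset_rfl subset_rfl
      (isStrategyOn_anyEdge hA _) (isStrategyOn_anyEdge hA _) winsFrom_empty winsFrom_empty
  | succ d ih =>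
    induction hn : S.ncard using Nat.strong_induction_on generalizing S E with | _ m ihm =>
    have hE : E.Finite := (hS.prod ((Set.finite_Iio (d + 1)).prod hS)).subset
      fun e he => ⟨(hA.1 e he).1, hd e he, (hA.1 e he).2⟩
    obtain ⟨W', σ', hz'⟩ := ih (hS.subset Set.sdiff_subset)
      (isArena_diff_attractor (F := {e ∈ E | e.2.1 = d}) (b := decide (Even d)) (T := ∅) hA hE)
      fun e he => lt_of_le_of_ne (Nat.lt_succ_iff.1 (hd e he.1.1)) fun h => he.1.2 ⟨he.1.1, h⟩
    by_cases hW : W' (!decide (Even d)) = ∅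
    · exact positionallyDetermined_of_opponent_empty hA rfl
        (fun e he => Nat.lt_succ_iff.1 (hd e he)) (fun e he => he.2) hz' hW
    obtain ⟨x, hx⟩ := Set.nonempty_iff_ne_empty.2 hW
    have hlt : (S \ attractor own S E ∅ (!decide (Even d)) (W' (!decide (Even d)))).ncard < m :=
      hn ▸ Set.ncard_lt_ncard (ssubset_iff_subset_not_subset.2 ⟨Set.sdiff_subset,
        fun h => (h (hz'.subset _ hx).1).2 (subset_attractor hx)⟩) hS
    obtain ⟨W'', σ'', hz''⟩ := ihm _ hlt (hS.subset Set.sdiff_subset)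
      (isArena_diff_attractor hA hE) (fun e he => hd e he.1.1) rfl
    exact positionallyDetermined_of_attractor_split hA hE hz' hz''

end Zielonka

section Play

variable {V : Type*}

def lastNode (v₀ : V) (l : List (V × ℕ × V)) : V := (l.getLast?.map fun e => e.2.2).getD v₀

theorem lastNode_append_singleton (v₀ : V) (l : List (V × ℕ × V)) (e : V × ℕ × V) :
    lastNode v₀ (l ++ [e]) = e.2.2 := by
  simp [lastNode]

theorem lastNode_cons (v₀ : V) (e : V × ℕ × V) (l : List (V × ℕ × V)) :
    lastNode v₀ (e :: l) = lastNode e.2.2 l := by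
  cases h : l.getLast? <;> simp [lastNode, List.getLast?_cons, h]

theorem lastNode_of_isFinPath {E : Set (V × ℕ × V)} {u v : V} {l : List (V × ℕ × V)}
    (h : IsFinPath E u l v) : lastNode u l = v := by
  induction l generalizing u with
  | nil => exact h
  | cons e l ih => rw [lastNode_cons]; exact ih h.2.2

theorem IsFinPath.append_singleton {E : Set (V × ℕ × V)} {u v : V} {l : List (V × ℕ × V)}
    (h : IsFinPath E u l v) {e : V × ℕ × V} (he : e ∈ E) (h1 : e.1 = v) :
    IsFinPath E u (l ++ [e]) e.2.2 := by
  induction l generalizing u with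
  | nil => exact ⟨he, h1.trans h.symm, rfl⟩
  | cons f l ih => exact ⟨h.1, h.2.1, ih h.2.2⟩

theorem IsFinPath.mem {E : Set (V × ℕ × V)} {X : Set V} (hE : ∀ e ∈ E, e.2.2 ∈ X) {u v : V}
    {l : List (V × ℕ × V)} (h : IsFinPath E u l v) (hu : u ∈ X) : v ∈ X := by
  induction l generalizing u with
  | nil => exact h ▸ hu
  | cons e l ih => exact ih h.2.2 (hE e h.1)

theorem lastNode_range_map {E : Set (V × ℕ × V)} {w : ℕ → V × ℕ × V} (hw : IsPathSeq E w)
    (k : ℕ) : lastNode (w 0).1 ((List.range k).map w) = (w k).1 := by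
  cases k with
  | zero => rfl
  | succ k => rw [List.range_succ, List.map_append, List.map_singleton,
      lastNode_append_singleton, (hw k).2]

theorem PGame.exists_play_of_moves (g : PGame V) (m : List (V × ℕ × V) → V × ℕ × V)
    (hm : ∀ l v, IsFinPath g.edges g.start l v → m l ∈ g.edges ∧ (m l).1 = v) :
    ∃ w, g.IsPlay w ∧ ∀ k, w k = m ((List.range k).map w) := by
  let hist : ℕ → List (V × ℕ × V) := fun k => Nat.rec [] (fun _ l => l ++ [m l]) k
  have hpath : ∀ k, IsFinPath g.edges g.start (hist k) (lastNode g.start (hist k)) := by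
    intro k
    induction k with
    | zero => rfl
    | succ k ih =>
      have h := hm _ _ ih
      exact (lastNode_append_singleton _ (hist k) _).symm ▸ ih.append_singleton h.1 h.2
  have hlink : ∀ k, (m (hist k)).2.2 = (m (hist (k + 1))).1 := fun k =>
    (lastNode_append_singleton _ (hist k) _).symm.trans (hm _ _ (hpath (k + 1))).2.symm
  have hhist : ∀ k, hist k = (List.range k).map fun j => m (hist j) := by
    intro k
    induction k with
    | zero => rfl
    | succ k ih =>
      rw [List.range_succ, List.map_append, List.map_singleton, ← ih]
  exact ⟨fun k => m (hist k), ⟨(hm _ _ (hpath 0)).2, fun k => ⟨(hm _ _ (hpath k)).1, hlink k⟩⟩,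
    fun k => congrArg m (hhist k)⟩

theorem PGame.exists_play_of_strategies (g : PGame V) (str ostr : List (V × ℕ × V) → V × ℕ × V)
    (hstr : ∀ l v, IsFinPath g.edges g.start l v → g.evenOwn v →
      str l ∈ g.edges ∧ (str l).1 = v)
    (hostr : ∀ l v, IsFinPath g.edges g.start l v → ¬ g.evenOwn v →
      ostr l ∈ g.edges ∧ (ostr l).1 = v) :
    ∃ w, g.IsPlay w ∧ (∀ k, g.evenOwn (w k).1 → w k = str ((List.range k).map w)) ∧
      ∀ k, ¬ g.evenOwn (w k).1 → w k = ostr ((List.range k).map w) := by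
  obtain ⟨w, hw, hwm⟩ := g.exists_play_of_moves
    (fun l => if g.evenOwn (lastNode g.start l) then str l else ostr l) fun l v hl => by
      rw [lastNode_of_isFinPath hl]
      split_ifs with hv
      exacts [hstr l v hl hv, hostr l v hl hv]
  have hlast : ∀ k, lastNode g.start ((List.range k).map w) = (w k).1 :=
    hw.1 ▸ lastNode_range_map hw.2
  refine ⟨w, hw, fun k hk => ?_, fun k hk => ?_⟩
  · rw [hwm k, if_pos (by rwa [hlast])]
  · rw [hwm k, if_neg (by rwa [hlast])]

theorem PGame.evenWins_of_positional (g : PGame V) (c : V → V × ℕ × V)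
    (hc : ∀ l v, IsFinPath g.edges g.start l v → g.evenOwn v → c v ∈ g.edges ∧ (c v).1 = v)
    (hwin : ∀ w, g.IsPlay w → (∀ k, g.evenOwn (w k).1 → w k = c (w k).1) →
      MaxInfOftEven fun k => (w k).2.1) :
    EvenWins g := by
  refine ⟨fun l => c (lastNode g.start l), fun l v hl hv => ?_, fun w hw hf => hwin w hw ?_⟩
  · dsimp only
    rw [lastNode_of_isFinPath hl]
    exact hc l v hl hv
  · have hlast := hw.1 ▸ lastNode_range_map hw.2
    exact fun k hk => (hf k hk).trans (congrArg c (hlast k))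

theorem PGame.not_evenWins_of_positional (g : PGame V) (c : V → V × ℕ × V)
    (hc : ∀ l v, IsFinPath g.edges g.start l v → ¬ g.evenOwn v → c v ∈ g.edges ∧ (c v).1 = v)
    (hwin : ∀ w, g.IsPlay w → (∀ k, ¬ g.evenOwn (w k).1 → w k = c (w k).1) →
      ¬ MaxInfOftEven fun k => (w k).2.1) :
    ¬ EvenWins g := by
  rintro ⟨str, hstr, hwinE⟩
  obtain ⟨w, hw, hE, hO⟩ := g.exists_play_of_strategies str (fun l => c (lastNode g.start l))
    hstr fun l v hl hv => by rw [lastNode_of_isFinPath hl]; exact hc l v hl hv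
  have hlast := hw.1 ▸ lastNode_range_map hw.2
  exact hwin w hw (fun k hk => (hO k hk).trans (congrArg c (hlast k))) (hwinE w hw hE)

end Play

namespace GameGraph

variable {n d : ℕ} (G : GameGraph n d)

theorem isArena : IsArena (Set.Icc 1 n) G.edges :=
  ⟨fun e he => have h := G.edges_alph e he; ⟨⟨h.1, h.2.1⟩, h.2.2.2.2.1, h.2.2.2.2.2⟩, G.total⟩

variable {G}

theorem mem_oddN {v : ℕ} (hv : v ∈ Set.Icc 1 n) (hvE : v ∉ G.evenN) : v ∈ G.oddN :=
  (G.union_eq ▸ hv).resolve_left hvE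

theorem mem_Icc_of_isFinPath {l : List Letter} {v : ℕ} (h : IsFinPath G.edges G.start l v) :
    v ∈ Set.Icc 1 n :=
  h.mem (fun e he => (G.isArena.1 e he).2) G.start_mem

variable (G)

theorem exists_winning_positional :
    (∃ τ : EPosStrat G, EWinningPos τ) ∨ ∃ τ : OPosStrat G, OWinningPos τ := by
  obtain ⟨W, σ, hz⟩ := positionallyDetermined_of_finite (own := fun v => decide (v ∈ G.evenN))
    (d + 1) (Set.finite_Icc 1 n) G.isArena fun e he =>
      Nat.lt_succ_of_le (G.edges_alph e he).2.2.2.1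
  rcases hz.cover G.start_mem with h | h
  · refine Or.inl ⟨⟨σ true, fun v hv => hz.isStrategyOn true v (G.union_eq ▸ Or.inl hv)
      (decide_eq_true hv)⟩, fun w hw => parityWin_true_iff.1 ?_⟩
    exact hz.winsFrom true w hw.1.2 (fun k hk => hw.2 k (of_decide_eq_true hk)) (hw.1.1 ▸ h)
  · refine Or.inr ⟨⟨σ false, fun v hv => hz.isStrategyOn false v (G.union_eq ▸ Or.inr hv)
      (decide_eq_false (Set.disjoint_right.1 G.disj hv))⟩, fun w hw hE => ?_⟩
    refine (hz.winsFrom false w hw.1.2 (fun k hk => hw.2 k ?_) (hw.1.1 ▸ h)).not_parityWin_not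
      (parityWin_true_iff.2 hE)
    exact mem_oddN (G.isArena.1 _ (hw.1.2 k).1).1 (of_decide_eq_false hk)

theorem evenWins_of_eWinningPos {τ : EPosStrat G} (hτ : EWinningPos τ) : EvenWins G.toPGame :=
  G.toPGame.evenWins_of_positional τ.choice (fun _ v _ hv => τ.mem v hv)
    fun w hw hf => hτ w ⟨hw, hf⟩

theorem not_evenWins_of_oWinningPos {τ : OPosStrat G} (hτ : OWinningPos τ) :
    ¬ EvenWins G.toPGame :=
  G.toPGame.not_evenWins_of_positional τ.choice
    (fun _ v hl hv => τ.mem v (mem_oddN (mem_Icc_of_isFinPath hl) hv))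
    fun w hw hf => hτ w ⟨hw, fun k hk => hf k (Set.disjoint_right.1 G.disj hk)⟩

end GameGraph

theorem infOft_interleave_iff {f g : ℕ → ℕ} {c : ℕ} (h0 : ∀ k, g (2 * k) = c)
    (h1 : ∀ k, g (2 * k + 1) = f k) {q : ℕ} : InfOft g q ↔ q = c ∨ InfOft f q := by
  refine ⟨fun hq => or_iff_not_imp_right.2 fun hf => ?_, ?_⟩
  · obtain ⟨N, hN⟩ : ∃ N, ∀ k, N ≤ k → f k ≠ q := by simpa [InfOft] using hf
    obtain ⟨m, hm, hmq⟩ := hq (2 * N)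
    obtain ⟨j, rfl | rfl⟩ := Nat.even_or_odd' m
    · exact hmq.symm.trans (h0 j)
    · exact absurd ((h1 j).symm.trans hmq) (hN j (by omega))
  · rintro (rfl | hq) N
    · exact ⟨2 * N, by omega, h0 N⟩
    · obtain ⟨k, hk, hkq⟩ := hq N
      exact ⟨2 * k + 1, by omega, (h1 k).trans hkq⟩

theorem maxInfOftEven_interleave_iff {f g : ℕ → ℕ} {c : ℕ} (h0 : ∀ k, g (2 * k) = c)
    (h1 : ∀ k, g (2 * k + 1) = f k) (hc : Odd c) (hf : ∀ k, c ≤ f k) :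
    MaxInfOftEven g ↔ MaxInfOftEven f := by
  simp only [MaxInfOftEven, infOft_interleave_iff h0 h1]
  refine exists_congr fun p => and_congr_right fun hp => ?_
  have hpc : p ≠ c := fun h => Nat.not_even_iff_odd.2 hc (h ▸ hp)
  simp only [hpc, false_or, forall_eq_or_imp]
  refine ⟨fun h => ⟨h.1, h.2.2⟩, fun h => ⟨h.1, ?_, h.2⟩⟩
  obtain ⟨k, -, hk⟩ := h.1 0
  exact hk ▸ hf k

section Automaton

variable {n d d' : ℕ} {Q : Type*} {A : Automaton Q}

theorem IsParityAutomaton.exists_transFun (hA : IsParityAutomaton n d d' A) :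
    ∃ tr : Q → Letter → Trans Q, ∀ s e, InAlph n d e →
      tr s e ∈ A.trans ∧ tSrc (tr s e) = s ∧ tLetter (tr s e) = e := by
  have : ∀ s e, ∃ t : Trans Q, InAlph n d e → t ∈ A.trans ∧ tSrc t = s ∧ tLetter t = e := by
    intro s e
    by_cases he : InAlph n d e
    · obtain ⟨p, s', h⟩ := hA.2 s e he
      exact ⟨(s, e, p, s'), fun _ => ⟨h, rfl, rfl⟩⟩
    · exact ⟨(s, e, 0, s), fun h => absurd h he⟩
  choose tr htr using this
  exact ⟨tr, htr⟩

theorem IsRun.eq_of_reads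
    (hdet : ∀ (s : Q) (e : Letter), InAlph n d e →
      ∃! t : Trans Q, t ∈ A.trans ∧ tSrc t = s ∧ tLetter t = e)
    {w : Word} (hw : ∀ k, InAlph n d (w k)) {ρ ρ' : ℕ → Trans Q} (h : IsRun A ρ)
    (h' : IsRun A ρ') (hr : Reads ρ w) (hr' : Reads ρ' w) : ρ = ρ' := by
  have hstep : ∀ k, tSrc (ρ k) = tSrc (ρ' k) → ρ k = ρ' k := fun k hk =>
    (hdet _ _ (hw k)).unique ⟨(h.2 k).1, rfl, hr k⟩ ⟨(h'.2 k).1, hk.symm, hr' k⟩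
  have hsrc : ∀ k, tSrc (ρ k) = tSrc (ρ' k) := by
    intro k
    induction k with
    | zero => rw [h.1, h'.1]
    | succ k ih => rw [← (h.2 k).2, ← (h'.2 k).2, hstep k ih]
  exact funext fun k => hstep k (hsrc k)

end Automaton

section Product

variable {n d : ℕ} {G : GameGraph n d} {Q : Type*} {A : Automaton Q}

theorem prodGame_edge_inl {ed : ((ℕ ⊕ Letter) × Q) × ℕ × ((ℕ ⊕ Letter) × Q)}
    (hed : ed ∈ (prodGame G A).edges) {v : ℕ} {s : Q} (h : ed.1 = (Sum.inl v, s)) :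
    ∃ e ∈ G.edges, e.1 = v ∧ ed = ((Sum.inl v, s), 1, (Sum.inr e, s)) := by
  rcases hed with ⟨e, he, s', rfl⟩ | ⟨t, -, -, rfl⟩
  · simp only [Prod.mk.injEq, Sum.inl.injEq] at h
    obtain ⟨rfl, rfl⟩ := h
    exact ⟨e, he, rfl, rfl⟩
  · simp at h

theorem prodGame_edge_inr {ed : ((ℕ ⊕ Letter) × Q) × ℕ × ((ℕ ⊕ Letter) × Q)}
    (hed : ed ∈ (prodGame G A).edges) {e : Letter} {s : Q} (h : ed.1 = (Sum.inr e, s)) :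
    ∃ t ∈ A.trans, tSrc t = s ∧ tLetter t = e ∧
      ed = ((Sum.inr e, s), tPrio t, (Sum.inl e.2.2, tTgt t)) := by
  rcases hed with ⟨e', -, s', rfl⟩ | ⟨t, ht, -, rfl⟩
  · simp at h
  · simp only [Prod.mk.injEq, Sum.inr.injEq] at h
    obtain ⟨rfl, rfl⟩ := h
    exact ⟨t, ht, rfl, rfl, rfl⟩

theorem prodGame_reachable {l : List (((ℕ ⊕ Letter) × Q) × ℕ × ((ℕ ⊕ Letter) × Q))}
    {x : (ℕ ⊕ Letter) × Q} (h : IsFinPath (prodGame G A).edges (prodGame G A).start l x) :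
    (∃ u s, x = (Sum.inl u, s) ∧ u ∈ Set.Icc 1 n) ∨ ∃ e s, x = (Sum.inr e, s) ∧ e ∈ G.edges := by
  refine h.mem (X := {y | (∃ u s, y = (Sum.inl u, s) ∧ u ∈ Set.Icc 1 n) ∨
    ∃ e s, y = (Sum.inr e, s) ∧ e ∈ G.edges}) (fun ed hed => ?_) (Or.inl ⟨_, _, rfl, G.start_mem⟩)
  rcases hed with ⟨e, he, s, rfl⟩ | ⟨t, -, hte, rfl⟩
  · exact Or.inr ⟨e, s, rfl, he⟩
  · exact Or.inl ⟨_, _, rfl, (G.isArena.1 _ hte).2⟩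

theorem prodGame_two_moves {Wp : ℕ → ((ℕ ⊕ Letter) × Q) × ℕ × ((ℕ ⊕ Letter) × Q)}
    (hW : IsPathSeq (prodGame G A).edges Wp) {k v : ℕ} {s : Q}
    (h : (Wp (2 * k)).1 = (Sum.inl v, s)) :
    ∃ e ∈ G.edges, ∃ t ∈ A.trans, tSrc t = s ∧ tLetter t = e ∧
      Wp (2 * k) = ((Sum.inl e.1, s), 1, (Sum.inr e, s)) ∧
      Wp (2 * k + 1) = ((Sum.inr e, s), tPrio t, (Sum.inl e.2.2, tTgt t)) := by
  obtain ⟨e, he, rfl, h0⟩ := prodGame_edge_inl (hW (2 * k)).1 h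
  obtain ⟨t, ht, hts, hte, h1⟩ := prodGame_edge_inr (hW (2 * k + 1)).1 (by rw [← (hW _).2, h0])
  exact ⟨e, he, t, ht, hts, hte, h0, h1⟩

theorem prodGame_play_decomp {Wp : ℕ → ((ℕ ⊕ Letter) × Q) × ℕ × ((ℕ ⊕ Letter) × Q)}
    (hW : (prodGame G A).IsPlay Wp) :
    ∃ (w : Word) (ρ : ℕ → Trans Q), IsPlay G w ∧ IsRun A ρ ∧ Reads ρ w ∧
      ∀ k, Wp (2 * k) = ((Sum.inl (w k).1, tSrc (ρ k)), 1, (Sum.inr (w k), tSrc (ρ k))) ∧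
        (Wp (2 * k + 1)).2.1 = tPrio (ρ k) := by
  have hsrc : ∀ k, ∃ v s, (Wp (2 * k)).1 = (Sum.inl v, s) := by
    intro k
    induction k with
    | zero => exact ⟨_, _, hW.1⟩
    | succ k ih =>
      obtain ⟨v, s, h⟩ := ih
      obtain ⟨e, -, t, -, -, -, -, h1⟩ := prodGame_two_moves hW.2 h
      exact ⟨e.2.2, tTgt t, by rw [Nat.mul_succ, ← (hW.2 _).2, h1]⟩
  choose v s hvs using hsrc
  choose w hw ρ hρ hρs hρw h0 h1 using fun k => prodGame_two_moves hW.2 (hvs k)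
  have hlink : ∀ k, (w k).2.2 = (w (k + 1)).1 ∧ tTgt (ρ k) = s (k + 1) := by
    intro k
    have h := (hW.2 (2 * k + 1)).2
    rw [h1 k, show 2 * k + 1 + 1 = 2 * (k + 1) by ring, h0 (k + 1)] at h
    simpa using h
  have hstart := hW.1
  rw [← Nat.mul_zero 2, h0 0] at hstart
  simp only [prodGame, Prod.mk.injEq, Sum.inl.injEq] at hstart
  refine ⟨w, ρ, ⟨hstart.1, fun k => ⟨hw k, (hlink k).1⟩⟩,
    ⟨(hρs 0).trans hstart.2, fun k => ⟨hρ k, (hlink k).2.trans (hρs (k + 1)).symm⟩⟩, hρw,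
    fun k => ⟨by rw [hρs k, h0 k], by rw [h1 k]⟩⟩

def prodMove (c : ℕ → Letter) (tr : Q → Letter → Trans Q) :
    (ℕ ⊕ Letter) × Q → ((ℕ ⊕ Letter) × Q) × ℕ × ((ℕ ⊕ Letter) × Q)
  | (Sum.inl v, s) => ((Sum.inl v, s), 1, (Sum.inr (c v), s))
  | (Sum.inr e, s) => ((Sum.inr e, s), tPrio (tr s e), (Sum.inl e.2.2, tTgt (tr s e)))

variable {c : ℕ → Letter} {tr : Q → Letter → Trans Q}

theorem prodMove_fst (x : (ℕ ⊕ Letter) × Q) : (prodMove c tr x).1 = x := by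
  obtain ⟨_ | _, _⟩ := x <;> rfl

theorem prodMove_inl_mem {v : ℕ} (hc : c v ∈ G.edges ∧ (c v).1 = v) (s : Q) :
    prodMove c tr (Sum.inl v, s) ∈ (prodGame G A).edges :=
  Or.inl ⟨c v, hc.1, s, by rw [prodMove, hc.2]⟩

theorem prodMove_inr_mem {e : Letter} {s : Q} (he : e ∈ G.edges)
    (htr : tr s e ∈ A.trans ∧ tSrc (tr s e) = s ∧ tLetter (tr s e) = e) :
    prodMove c tr (Sum.inr e, s) ∈ (prodGame G A).edges :=
  Or.inr ⟨tr s e, htr.1, by rw [htr.2.2]; exact he, by rw [prodMove, htr.2.1, htr.2.2]⟩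

theorem eq_of_prodMove {u : ℕ} {e : Letter} {s : Q} {x}
    (h : x = ((Sum.inl u, s), 1, (Sum.inr e, s))) (hx : x = prodMove c tr x.1) : e = c u := by
  subst h
  simpa [prodMove] using hx

end Product

section Separator

variable {n d d' : ℕ} {G : GameGraph n d} {Q : Type*} {A : Automaton Q}

theorem maxInfOftEven_prodGame_iff_accepting (hA : IsParityAutomaton n d d' A)
    {Wp : ℕ → ((ℕ ⊕ Letter) × Q) × ℕ × ((ℕ ⊕ Letter) × Q)} {w : Word} {ρ : ℕ → Trans Q}
    (hρ : IsRun A ρ)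
    (hWρ : ∀ k, Wp (2 * k) = ((Sum.inl (w k).1, tSrc (ρ k)), 1, (Sum.inr (w k), tSrc (ρ k))) ∧
      (Wp (2 * k + 1)).2.1 = tPrio (ρ k)) :
    (MaxInfOftEven fun k => (Wp k).2.1) ↔ Accepting ρ :=
  maxInfOftEven_interleave_iff (fun k => by rw [(hWρ k).1]) (fun k => (hWρ k).2) odd_one
    fun k => (hA.1 _ (hρ.2 k).1).2.1

theorem evenWins_prodGame_of_eWinningPos (hA : IsParityAutomaton n d d' A)
    (hSep : ∀ w ∈ PosEven n d, w ∈ Lang A)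
    (hdet : ∀ (s : Q) (e : Letter), InAlph n d e →
      ∃! t : Trans Q, t ∈ A.trans ∧ tSrc t = s ∧ tLetter t = e)
    {τ : EPosStrat G} (hτ : EWinningPos τ) : EvenWins (prodGame G A) := by
  obtain ⟨tr, htr⟩ := hA.exists_transFun
  refine (prodGame G A).evenWins_of_positional (prodMove τ.choice tr)
    (fun l x hl hx => ⟨?_, prodMove_fst x⟩) fun Wp hWp hf => ?_
  · rcases prodGame_reachable hl with ⟨u, s, rfl, -⟩ | ⟨e, s, rfl, he⟩
    · exact prodMove_inl_mem (τ.mem u hx) s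
    · exact prodMove_inr_mem he (htr s e (G.edges_alph e he))
  obtain ⟨w, ρ, hw, hρ, hρw, hWρ⟩ := prodGame_play_decomp hWp
  have hwτ : ArisesE τ w := ⟨hw, fun k hk =>
    eq_of_prodMove (hWρ k).1 (hf (2 * k) (by rw [(hWρ k).1]; exact hk))⟩
  obtain ⟨ρ', hρ', hρ'w, hacc⟩ := hSep w ⟨G, τ, hτ, hwτ⟩
  obtain rfl := IsRun.eq_of_reads hdet (fun k => G.edges_alph _ (hw.2 k).1) hρ' hρ hρ'w hρw
  exact (maxInfOftEven_prodGame_iff_accepting hA hρ' hWρ).2 hacc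

theorem not_evenWins_prodGame_of_oWinningPos (hA : IsParityAutomaton n d d' A)
    (hSep : ∀ w ∈ PosOdd n d, w ∉ Lang A) {τ : OPosStrat G} (hτ : OWinningPos τ) :
    ¬ EvenWins (prodGame G A) := by
  obtain ⟨tr, -⟩ := hA.exists_transFun
  refine (prodGame G A).not_evenWins_of_positional (prodMove τ.choice tr)
    (fun l x hl hx => ⟨?_, prodMove_fst x⟩) fun Wp hWp hf hwin => ?_
  · rcases prodGame_reachable hl with ⟨u, s, rfl, hu⟩ | ⟨e, s, rfl, -⟩
    · exact prodMove_inl_mem (τ.mem u (GameGraph.mem_oddN hu hx)) s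
    · exact absurd trivial hx
  obtain ⟨w, ρ, hw, hρ, hρw, hWρ⟩ := prodGame_play_decomp hWp
  have hwτ : ArisesO τ w := ⟨hw, fun k hk => eq_of_prodMove (hWρ k).1
    (hf (2 * k) (by rw [(hWρ k).1]; exact Set.disjoint_right.1 G.disj hk))⟩
  exact hSep w ⟨G, τ, hτ, hwτ⟩
    ⟨ρ, hρ, hρw, (maxInfOftEven_prodGame_iff_accepting hA hρ hWρ).1 hwin⟩

end Separator

theorem deterministic_separator_product_equiv_general (n d : ℕ)
    (G : GameGraph n d) {Q : Type} (A : Automaton Q) (d' : ℕ)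
    (hA : IsParityAutomaton n d d' A) (hSep : PGSeparator n d A)
    (hdet : ∀ (s : Q) (e : Letter), InAlph n d e →
      ∃! t : Trans Q, t ∈ A.trans ∧ tSrc t = s ∧ tLetter t = e) :
    EvenWins G.toPGame ↔ EvenWins (prodGame G A) := by
  rcases G.exists_winning_positional with ⟨τ, hτ⟩ | ⟨τ, hτ⟩
  · exact iff_of_true (G.evenWins_of_eWinningPos hτ)
      (evenWins_prodGame_of_eWinningPos hA hSep.1 hdet hτ)
  · exact iff_of_false (G.not_evenWins_of_oWinningPos hτ)
      (not_evenWins_prodGame_of_oWinningPos hA hSep.2 hτ)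

/-- If `A` is a deterministic PG separator, then Even has a
winning strategy in `G` iff she has a winning strategy in the synchronized product
`G × A`. -/
theorem deterministic_separator_product_equiv (n d : ℕ) (hn : 1 ≤ n) (hd : 1 ≤ d)
    (G : GameGraph n d) {Q : Type} [Finite Q] (A : Automaton Q) (d' : ℕ)
    (hA : IsParityAutomaton n d d' A) (hSep : PGSeparator n d A)
    (hdet : ∀ (s : Q) (e : Letter), InAlph n d e →
      ∃! t : Trans Q, t ∈ A.trans ∧ tSrc t = s ∧ tLetter t = e) :
    EvenWins G.toPGame ↔ EvenWins (prodGame G A) :=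
  deterministic_separator_product_equiv_general n d G A d' hA hSep hdet

end PGSep
end

section
/- Let ρ be a run of a nondeterministic parity automaton. If bad(ρ) is finite, then ρ is accepting: the largest priority labeling infinitely many transitions of ρ is even. -/
namespace PGSep

/-- If `bad(ρ)` is finite for a run `ρ` of a parity automaton,
then `ρ` is accepting. -/
theorem bad_finite_accepting {Q : Type} [Finite Q] (n d d' : ℕ) (hn : 1 ≤ n)
    (hd : 1 ≤ d) (A : Automaton Q) (hA : IsParityAutomaton n d d' A)
    (ρ : ℕ → Trans Q) (hρ : IsRun A ρ) (B : ℕ) (hbad : badLE ρ B) :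
    Accepting ρ := by
  classical
  set f : ℕ → ℕ := fun k => tPrio (ρ k) with hfdef
  show MaxInfOftEven f
  have hbound : ∀ k, f k ≤ d' := fun k => ((hA.1 (ρ k) (hρ.2 k).1).2).2
  have hle : ∀ q, InfOft f q → q ≤ d' := by
    intro q hq
    obtain ⟨k, _, hk⟩ := hq 0
    exact hk ▸ hbound k
  have hexist : ∃ p, InfOft f p := by
    by_contra h
    push_neg at h
    have h' : ∀ q, ∃ N, ∀ k, N ≤ k → f k ≠ q := by
      intro q
      have hq := h q
      unfold InfOft at hq
      push_neg at hq
      exact hq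
    choose N hN using h'
    set M := (Finset.range (d' + 1)).sup N with hM
    have hfM : f M ∈ Finset.range (d' + 1) :=
      Finset.mem_range.mpr (Nat.lt_succ_of_le (hbound M))
    exact hN (f M) M (Finset.le_sup hfM) rfl
  obtain ⟨p0, hp0⟩ := hexist
  have hSne : ((Finset.range (d' + 1)).filter (fun q => InfOft f q)).Nonempty :=
    ⟨p0, Finset.mem_filter.mpr ⟨Finset.mem_range.mpr (Nat.lt_succ_of_le (hle p0 hp0)), hp0⟩⟩
  set p := ((Finset.range (d' + 1)).filter (fun q => InfOft f q)).max' hSne with hpdef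
  have hp : InfOft f p :=
    (Finset.mem_filter.mp (Finset.max'_mem _ hSne)).2
  have hmax : ∀ q, InfOft f q → q ≤ p := by
    intro q hq
    exact Finset.le_max' _ q
      (Finset.mem_filter.mpr ⟨Finset.mem_range.mpr (Nat.lt_succ_of_le (hle q hq)), hq⟩)
  refine ⟨p, ?_, hp, hmax⟩
  rcases Nat.even_or_odd p with he | ho
  · exact he
  exfalso
  -- every priority above p occurs only finitely often
  have hfin : ∀ q, p < q → ∃ N, ∀ k, N ≤ k → f k ≠ q := by
    intro q hq
    by_contra h
    push_neg at h
    exact absurd (hmax q h) (Nat.not_le.mpr hq)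
  choose Nq hNq using hfin
  set N := (Finset.range (d' + 1)).sup (fun q => if h : p < q then Nq q h else 0) with hNdef
  have hcap : ∀ k, N ≤ k → f k ≤ p := by
    intro k hk
    by_contra h
    push_neg at h
    have hmem : f k ∈ Finset.range (d' + 1) :=
      Finset.mem_range.mpr (Nat.lt_succ_of_le (hbound k))
    have hNle : Nq (f k) h ≤ N := by
      have := Finset.le_sup (f := fun q => if h : p < q then Nq q h else 0) hmem
      simpa [dif_pos h] using this
    exact hNq (f k) h k (le_trans hNle hk) rfl
  -- build B+1 indices ≥ N where f equals p
  let g : ℕ → ℕ := fun i =>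
    Nat.rec (Classical.choose (hp N)) (fun _ prev => Classical.choose (hp (prev + 1))) i
  have hg0 : N ≤ g 0 ∧ f (g 0) = p := Classical.choose_spec (hp N)
  have hgs : ∀ i, g i + 1 ≤ g (i + 1) ∧ f (g (i + 1)) = p :=
    fun i => Classical.choose_spec (hp (g i + 1))
  have hgmono : StrictMono g := strictMono_nat_of_lt_succ fun i => (hgs i).1
  have hgN : ∀ i, N ≤ g i := by
    intro i
    induction i with
    | zero => exact hg0.1
    | succ i ih => exact le_trans ih (le_of_lt (hgmono (Nat.lt_succ_self i)))
  have hgp : ∀ i, f (g i) = p := by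
    intro i
    cases i with
    | zero => exact hg0.2
    | succ i => exact (hgs i).2
  set b := g B + 1 with hbdef
  have hcard := hbad N b p ho (fun i hi _ => hcap i hi)
  have hcard' : B + 1 ≤ ((Finset.Ico N b).filter fun i => f i = p).card := by
    have hmaps : ∀ i ∈ Finset.range (B + 1),
        g i ∈ (Finset.Ico N b).filter fun i => f i = p := by
      intro i hi
      refine Finset.mem_filter.mpr ⟨Finset.mem_Ico.mpr ⟨hgN i, ?_⟩, hgp i⟩
      have : g i ≤ g B := hgmono.monotone (Nat.lt_succ_iff.mp (Finset.mem_range.mp hi))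
      omega
    have := Finset.card_le_card_of_injOn g hmaps (hgmono.injective.injOn)
    simpa using this
  have heq : (Finset.filter (fun i => tPrio (ρ i) = p) (Finset.Ico N b)) =
      Finset.filter (fun i => f i = p) (Finset.Ico N b) := rfl
  rw [heq] at hcard
  omega

end PGSep
end
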